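/- arXiv:2302.12588 — 6 statements merged into one kernel-verified Lean document; each statement's English description precedes it below -/
import Mathlib

section
/- The contact graph of any 3-dimensional sphere packing with generic radii contains no clique on 5 vertices. Moreover this bound is tight: there exists a 3-dimensional sphere packing with generic radii whose contact graph contains a clique on 4 vertices. -/
noncomputable section

/-- A `d`-dimensional sphere packing with contact graph `G`, centres `p` and radii `r`:
the spheres have disjoint interiors and two spheres touch iff the vertices are adjacent. -/
def IsSpherePacking {V : Type*} (d : ℕ) (G : SimpleGraph V)
    (p : V → EuclideanSpace ℝ (Fin d)) (r : V → ℝ) : Prop :=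
  (∀ v, 0 < r v) ∧
  ∀ v w : V, v ≠ w →
    r v + r w ≤ dist (p v) (p w) ∧ (dist (p v) (p w) = r v + r w ↔ G.Adj v w)

/-- The radii are generic: injective and algebraically independent over `ℚ`. -/
def GenericRadii {V : Type*} (r : V → ℝ) : Prop :=
  Function.Injective r ∧ AlgebraicIndependent ℚ r

/-!
Five mutually tangent spheres in `ℝ³`: the four vectors from one centre to the others are
linearly dependent, so their Gram matrix is singular. By polarization its entries are fixed
polynomials in the radii, and the determinant of that polynomial matrix is nonzero (at all radii
equal to `1` it is `2⁴ · 5`), so the radii satisfy a nontrivial algebraic relation.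

For the clique on four vertices, rational affine images of four elements of a transcendence basis
of `ℝ` over `ℚ` give algebraically independent radii as close to `1` as we like. Near equal radii
the polynomial Gram matrix is positive definite, and its Cholesky factor gives the centres of four
mutually tangent spheres explicitly.
-/

open Module Matrix

def MutuallyTangent {ι E : Type*} [PseudoMetricSpace E] (p : ι → E) (R : ι → ℝ) : Prop :=
  ∀ i j, i ≠ j → dist (p i) (p j) = R i + R j

def tangentGram {A : Type*} [CommRing A] {n : ℕ} (R : Fin (n + 1) → A) :
    Matrix (Fin n) (Fin n) A :=
  of fun i j ↦ if i = j then (R 0 + R i.succ) ^ 2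
    else R 0 ^ 2 + R 0 * (R i.succ + R j.succ) - R i.succ * R j.succ

lemma RingHom.mapMatrix_tangentGram {A B : Type*} [CommRing A] [CommRing B] (f : A →+* B)
    {n : ℕ} (R : Fin (n + 1) → A) : f.mapMatrix (tangentGram R) = tangentGram (f ∘ R) := by
  ext i j
  simp only [tangentGram, RingHom.mapMatrix_apply, map_apply, of_apply, apply_ite f]
  split_ifs <;> simp

lemma det_tangentGram_one (n : ℕ) :
    (tangentGram fun _ : Fin (n + 1) ↦ (1 : ℚ)).det = 2 ^ n * (n + 1) := by
  have h : tangentGram (fun _ : Fin (n + 1) ↦ (1 : ℚ)) = (2 : ℚ) • (1 + vecMulVec 1 1) := by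
    ext i j
    by_cases hij : i = j <;> simp [tangentGram, hij, one_apply] <;> norm_num
  rw [h, det_smul, vecMulVec_eq (ι := Unit), det_one_add_replicateCol_mul_replicateRow]
  simp [add_comm]

open MvPolynomial in
lemma det_tangentGram_X_ne_zero (n : ℕ) :
    (tangentGram (X : Fin (n + 1) → MvPolynomial (Fin (n + 1)) ℚ)).det ≠ 0 := by
  intro h
  have := congrArg (eval fun _ ↦ (1 : ℚ)) h
  rw [RingHom.map_det, RingHom.mapMatrix_tangentGram, Function.comp_def] at this
  simp only [eval_X, det_tangentGram_one, map_zero] at this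
  exact absurd this (by positivity)

section InnerProductSpace

variable {E : Type*} [NormedAddCommGroup E] [InnerProductSpace ℝ E]

lemma MutuallyTangent.gram_eq_tangentGram {n : ℕ} {p : Fin (n + 1) → E} {R : Fin (n + 1) → ℝ}
    (h : MutuallyTangent p R) : gram ℝ (fun i ↦ p i.succ - p 0) = tangentGram R := by
  ext i j
  have hi := h i.succ 0 i.succ_ne_zero
  rw [dist_eq_norm] at hi
  simp only [gram, of_apply, tangentGram]
  split_ifs with hij
  · rw [hij, real_inner_self_eq_norm_sq, ← hij, hi, add_comm]
  · have hj := h j.succ 0 j.succ_ne_zero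
    have hij' := h i.succ j.succ (Fin.succ_injective _ |>.ne hij)
    rw [dist_eq_norm] at hj hij'
    have := norm_sub_sq_real (p i.succ - p 0) (p j.succ - p 0)
    rw [sub_sub_sub_cancel_right, hij', hi, hj] at this
    linarith

lemma mutuallyTangent_of_gram_eq_tangentGram {n : ℕ} {p : Fin (n + 1) → E}
    {R : Fin (n + 1) → ℝ} (hR : ∀ i, 0 ≤ R i)
    (h : gram ℝ (fun i ↦ p i.succ - p 0) = tangentGram R) : MutuallyTangent p R := by
  have hG (i j : Fin n) : inner ℝ (p i.succ - p 0) (p j.succ - p 0) = tangentGram R i j := by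
    rw [← h, gram_apply]
  have hnorm (i : Fin n) : ‖p i.succ - p 0‖ = R 0 + R i.succ := by
    rw [← sq_eq_sq₀ (norm_nonneg _) (add_nonneg (hR _) (hR _)), ← real_inner_self_eq_norm_sq,
      hG, tangentGram, of_apply, if_pos rfl]
  intro a b hab
  cases a using Fin.cases with
  | zero =>
    cases b using Fin.cases with
    | zero => exact absurd rfl hab
    | succ j => rw [dist_comm, dist_eq_norm, hnorm]
  | succ i =>
    cases b using Fin.cases with
    | zero => rw [dist_eq_norm, hnorm, add_comm]
    | succ j =>
      have hij : i ≠ j := fun h ↦ hab (congrArg _ h)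
      rw [dist_eq_norm, ← sub_sub_sub_cancel_right _ _ (p 0),
        ← sq_eq_sq₀ (norm_nonneg _) (add_nonneg (hR _) (hR _)), norm_sub_sq_real, hnorm, hnorm,
        hG, tangentGram, of_apply, if_neg hij]
      ring

open MvPolynomial in
theorem MutuallyTangent.not_algebraicIndependent [FiniteDimensional ℝ E] {n : ℕ}
    (hE : finrank ℝ E ≤ n) {p : Fin (n + 2) → E} {R : Fin (n + 2) → ℝ}
    (h : MutuallyTangent p R) : ¬ AlgebraicIndependent ℚ R := by
  intro hind
  have hdet : (gram ℝ fun i : Fin (n + 1) ↦ p i.succ - p 0).det ≠ 0 := by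
    have hX : tangentGram R = (aeval (R := ℚ) R).toRingHom.mapMatrix (tangentGram X) := by
      rw [RingHom.mapMatrix_tangentGram]
      congr
      ext
      simp
    rw [h.gram_eq_tangentGram, hX, ← RingHom.map_det]
    exact (map_ne_zero_iff _ hind).mpr (det_tangentGram_X_ne_zero _)
  have := (linearIndependent_of_det_gram_ne_zero hdet).fintype_card_le_finrank
  simp only [Fintype.card_fin] at this
  omega

end InnerProductSpace

lemma IsSpherePacking.mutuallyTangent_comp {V ι : Type*} {d : ℕ} {G : SimpleGraph V}
    {p : V → EuclideanSpace ℝ (Fin d)} {r : V → ℝ} (hP : IsSpherePacking d G p r)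
    (f : (⊤ : SimpleGraph ι) ↪g G) : MutuallyTangent (p ∘ f) (r ∘ f) :=
  fun _ _ hij ↦ (hP.2 _ _ (f.injective.ne hij)).2.mpr (f.map_adj_iff.mpr hij)

theorem IsSpherePacking.not_isNClique_of_genericRadii {V : Type*} {d : ℕ} {G : SimpleGraph V}
    {p : V → EuclideanSpace ℝ (Fin d)} {r : V → ℝ} (hP : IsSpherePacking d G p r)
    (hr : GenericRadii r) (s : Finset V) : ¬ G.IsNClique (d + 2) s := by
  intro hs
  let f := SimpleGraph.topEmbeddingOfNotCliqueFree hs.not_cliqueFree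
  exact (hP.mutuallyTangent_comp f).not_algebraicIndependent (by simp) (hr.2.comp f f.injective)

lemma isSpherePacking_top {V : Type*} {d : ℕ} {p : V → EuclideanSpace ℝ (Fin d)} {r : V → ℝ}
    (hr : ∀ v, 0 < r v) (h : MutuallyTangent p r) : IsSpherePacking d ⊤ p r :=
  ⟨hr, fun v w hvw ↦ ⟨(h v w hvw).ge, by simp [h v w hvw, hvw]⟩⟩

lemma exists_algebraicIndependent_real (n : ℕ) :
    ∃ t : Fin n → ℝ, AlgebraicIndependent ℚ t := by
  obtain ⟨B, hB⟩ := exists_isTranscendenceBasis ℚ ℝ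
  have : Infinite B := by
    by_contra hfin
    rw [not_infinite_iff_finite] at hfin
    have := hB.isAlgebraic
    have h := Algebra.IsAlgebraic.cardinalMk_le_max (Algebra.adjoin ℚ (Set.range ((↑) : B → ℝ))) ℝ
    rw [← Cardinal.mk_congr hB.1.aevalEquiv.toEquiv] at h
    exact Cardinal.aleph0_lt_continuum.not_ge (by simpa [Cardinal.mk_real] using h)
  exact ⟨_, hB.1.comp _ (Fin.valEmbedding.trans (Infinite.natEmbedding B)).injective⟩

open Polynomial in
lemma exists_algebraicIndependent_abs_sub_lt (n : ℕ) (c : ℚ) {ε : ℝ} (hε : 0 < ε) :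
    ∃ r : Fin n → ℝ, AlgebraicIndependent ℚ r ∧ ∀ i, |r i - c| < ε := by
  obtain ⟨t, ht⟩ := exists_algebraicIndependent_real n
  have (i : Fin n) : ∃ q : ℚ, 0 < q ∧ (q : ℝ) < ε / (|t i| + 1) := by
    obtain ⟨q, hq0, hq⟩ := exists_rat_btwn (div_pos hε (by positivity : 0 < |t i| + 1))
    exact ⟨q, by exact_mod_cast hq0, hq⟩
  choose q hq0 hq using this
  refine ⟨fun i ↦ aeval (t i) (C (q i) * X + C c),
    ht.polynomial_aeval_of_transcendental fun i ↦ ?_, fun i ↦ ?_⟩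
  · refine Polynomial.transcendental _ ?_ ?_
    · rw [natDegree_linear (hq0 i).ne']
      exact one_ne_zero
    · rw [leadingCoeff_linear (hq0 i).ne']
      exact mem_nonZeroDivisors_of_ne_zero (hq0 i).ne'
  · have hq0' : (0 : ℝ) < q i := by exact_mod_cast hq0 i
    calc |aeval (t i) (C (q i) * X + C c) - c| = q i * |t i| := by
          simp [abs_mul, abs_of_pos hq0']
      _ ≤ q i * (|t i| + 1) := by gcongr; linarith
      _ < ε := (lt_div_iff₀ (by positivity)).mp (hq i)

lemma det_tangentGram_fin_four (R : Fin 4 → ℝ) :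
    (tangentGram R).det =
      4 * ((R 0 * R 1 * R 2 + R 0 * R 1 * R 3 + R 0 * R 2 * R 3 + R 1 * R 2 * R 3) ^ 2
        - 2 * ((R 0 * R 1 * R 2) ^ 2 + (R 0 * R 1 * R 3) ^ 2 + (R 0 * R 2 * R 3) ^ 2
          + (R 1 * R 2 * R 3) ^ 2)) := by
  simp only [tangentGram, det_fin_three, of_apply, Fin.succ_zero_eq_one, Fin.succ_one_eq_two,
    Fin.reduceSucc, Fin.reduceEq, if_true, if_false, zero_ne_one, one_ne_zero]
  ring

lemma sq_sum_sub_two_mul_sum_sq_pos {u v w x m M : ℝ} (hm : 0 < m) (hM : 2 * M ≤ 3 * m)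
    (hu : u ∈ Set.Icc m M) (hv : v ∈ Set.Icc m M) (hw : w ∈ Set.Icc m M)
    (hx : x ∈ Set.Icc m M) :
    0 < (u + v + w + x) ^ 2 - 2 * (u ^ 2 + v ^ 2 + w ^ 2 + x ^ 2) := by
  obtain ⟨hu, hu'⟩ := hu
  obtain ⟨hv, hv'⟩ := hv
  obtain ⟨hw, hw'⟩ := hw
  obtain ⟨hx, hx'⟩ := hx
  nlinarith [mul_le_mul hu hv hm.le (by linarith), mul_le_mul hu hw hm.le (by linarith),
    mul_le_mul hu hx hm.le (by linarith), mul_le_mul hv hw hm.le (by linarith),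
    mul_le_mul hv hx hm.le (by linarith), mul_le_mul hw hx hm.le (by linarith)]

lemma mul_mul_mem_Icc_of_abs_sub_one_lt {a b c : ℝ} (ha : |a - 1| < 1 / 20)
    (hb : |b - 1| < 1 / 20) (hc : |c - 1| < 1 / 20) :
    a * b * c ∈ Set.Icc ((19 / 20) ^ 3) ((21 / 20) ^ 3) := by
  rw [abs_sub_lt_iff] at ha hb hc
  have hab : (19 / 20) ^ 2 ≤ a * b := by nlinarith
  have hab' : a * b ≤ (21 / 20) ^ 2 := by nlinarith
  constructor <;> nlinarith

lemma det_tangentGram_pos {R : Fin 4 → ℝ} (hR : ∀ i, |R i - 1| < 1 / 20) :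
    0 < (tangentGram R).det := by
  rw [det_tangentGram_fin_four]
  refine mul_pos four_pos <| sq_sum_sub_two_mul_sum_sq_pos (by norm_num) (by norm_num)
    (mul_mul_mem_Icc_of_abs_sub_one_lt (hR 0) (hR 1) (hR 2))
    (mul_mul_mem_Icc_of_abs_sub_one_lt (hR 0) (hR 1) (hR 3))
    (mul_mul_mem_Icc_of_abs_sub_one_lt (hR 0) (hR 2) (hR 3))
    (mul_mul_mem_Icc_of_abs_sub_one_lt (hR 1) (hR 2) (hR 3))

lemma exists_gram_eq_tangentGram {R : Fin 4 → ℝ} (hR : ∀ i, 0 < R i)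
    (hdet : 0 < (tangentGram R).det) :
    ∃ q : Fin 3 → EuclideanSpace ℝ (Fin 3), gram ℝ q = tangentGram R := by
  obtain ⟨a, b, c, d, rfl⟩ : ∃ a b c d, R = ![a, b, c, d] :=
    ⟨R 0, R 1, R 2, R 3, by ext i; fin_cases i <;> rfl⟩
  have ha := hR 0
  have hb := hR 1
  have hc := hR 2
  rw [det_tangentGram_fin_four] at hdet
  simp only [Matrix.cons_val] at ha hb hc hdet
  obtain ⟨s, hs0, hs⟩ : ∃ s, 0 < s ∧ s ^ 2 = a * b * c * (a + b + c) :=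
    ⟨_, Real.sqrt_pos.mpr (by positivity), Real.sq_sqrt (by positivity)⟩
  obtain ⟨w, hw⟩ : ∃ w, w ^ 2 = (a * b * c + a * b * d + a * c * d + b * c * d) ^ 2
      - 2 * ((a * b * c) ^ 2 + (a * b * d) ^ 2 + (a * c * d) ^ 2 + (b * c * d) ^ 2) :=
    ⟨_, Real.sq_sqrt (by linarith)⟩
  -- the rows of the Cholesky factor of `tangentGram ![a, b, c, d]`
  refine ⟨![!₂[a + b, 0, 0],
    !₂[(a ^ 2 + a * b + a * c - b * c) / (a + b), 2 * s / (a + b), 0],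
    !₂[(a ^ 2 + a * b + a * d - b * d) / (a + b),
      (a * b * (a + b) * (c + d) - c * d * (a ^ 2 + b ^ 2)) / ((a + b) * s), w / s]], ?_⟩
  ext i j
  fin_cases i <;> fin_cases j <;>
    simp [gram, tangentGram, PiLp.inner_apply, Fin.sum_univ_three] <;> field_simp
  all_goals first
    | ring1
    | linear_combination 4 * hs
    | linear_combination ((a ^ 2 + a * b + a * d - b * d) ^ 2 - (a + b) ^ 2 * (a + d) ^ 2) * hs
        + (a + b) ^ 2 * hw

theorem exists_genericRadii_isSpherePacking_top :
    ∃ (p : Fin 4 → EuclideanSpace ℝ (Fin 3)) (r : Fin 4 → ℝ),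
      IsSpherePacking 3 ⊤ p r ∧ GenericRadii r := by
  obtain ⟨r, hind, hr⟩ := exists_algebraicIndependent_abs_sub_lt 4 1 (ε := 1 / 20) (by norm_num)
  simp only [Rat.cast_one] at hr
  have hpos (i : Fin 4) : 0 < r i := by linarith [(abs_sub_lt_iff.mp (hr i)).2]
  obtain ⟨q, hq⟩ := exists_gram_eq_tangentGram hpos (det_tangentGram_pos hr)
  have hp : MutuallyTangent (Fin.cons 0 q : Fin 4 → EuclideanSpace ℝ (Fin 3)) r :=
    mutuallyTangent_of_gram_eq_tangentGram (fun i ↦ (hpos i).le) (by simpa using hq)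
  exact ⟨_, r, isSpherePacking_top hpos hp, hind.injective, hind⟩

/-- The contact graph of a generic-radii sphere packing contains no clique on 5 vertices,
and this is tight: some generic-radii sphere packing has a clique on 4 vertices. -/
theorem generic_no_K5_and_K4_tight :
    (∀ (V : Type) [Fintype V] (G : SimpleGraph V)
        (p : V → EuclideanSpace ℝ (Fin 3)) (r : V → ℝ),
      IsSpherePacking 3 G p r → GenericRadii r →
      ∀ s : Finset V, ¬ G.IsNClique 5 s) ∧
    (∃ (n : ℕ) (G : SimpleGraph (Fin n))
        (p : Fin n → EuclideanSpace ℝ (Fin 3)) (r : Fin n → ℝ) (s : Finset (Fin n)),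
      IsSpherePacking 3 G p r ∧ GenericRadii r ∧ G.IsNClique 4 s) := by
  refine ⟨fun V _ G p r hP hr s ↦ hP.not_isNClique_of_genericRadii hr s, ?_⟩
  obtain ⟨p, r, hP, hr⟩ := exists_genericRadii_isSpherePacking_top
  exact ⟨4, ⊤, p, r, Finset.univ, hP, hr, by simp [SimpleGraph.isNClique_iff]⟩

end
end

section
/- Let k ≥ 3 and let r₁,…,r_k be positive real numbers. Suppose p₁ = (x₁,y₁), …, p_k = (x_k,y_k) are points of ℝ² satisfying: (i) x_i² + y_i² = r_i² + 2r_i for each 1 ≤ i ≤ k, and y₁ = 0; (ii) x_i y_{i+1} − y_i x_{i+1} < 0 for each 1 ≤ i ≤ k−1, and x_k y₁ − y_k x₁ < 0 (that is, each consecutive pair of position vectors is linearly independent with p_{i+1} clockwise of p_i, and p₁ is clockwise of p_k); (iii) ‖p_i − p_{i+1}‖ = r_i + r_{i+1} for each 1 ≤ i ≤ k−1. If in addition ‖p₁ − p_k‖ = r₁ + r_k, then the family (r₁,…,r_k) is not algebraically independent over ℚ (i.e., either two of the rᵢ coincide or some nonzero polynomial with rational coefficients vanishes at (r₁,…,r_k)).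 -/
/-!
Put `q_i = p_i / (2 r_i)`. The conditions `‖p_i‖² = r_i² + 2 r_i` and `‖p_i - p_j‖ = r_i + r_j`
become `‖q_i - q_j‖ = 1`, and `r_i = 2 / (4 ‖q_i‖² - 1)`; so `q_1, …, q_k` is a closed polygon with
unit sides and `q_1` on the horizontal axis. Over the field `K` generated by the first coordinates
of `q_1, …, q_{k-1}`, each second coordinate is algebraic (it is a square root away from the
previous one), and `q_k` is an intersection point of the unit circles about `q_1` and `q_{k-1}`,
which are distinct by the orientation conditions. Hence all `r_i` are algebraic over a field
generated by `k - 1` numbers, and `k` such numbers cannot be algebraically independent.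
-/

open Polynomial Set

theorem isAlgebraic_ofNat {R A : Type*} [CommRing R] [Nontrivial R] [Ring A] [Algebra R A]
    (n : ℕ) [n.AtLeastTwo] : IsAlgebraic R (OfNat.ofNat n : A) := by
  exact_mod_cast isAlgebraic_natCast (R := R) (A := A) n

theorem IsAlgebraic.of_quadratic_eq_zero {K E : Type*} [Field K] [Field E] [Algebra K E]
    {D p q z : E} (hD : IsAlgebraic K D) (hp : IsAlgebraic K p) (hq : IsAlgebraic K q)
    (hD0 : D ≠ 0) (h : D * z ^ 2 + p * z + q = 0) : IsAlgebraic K z := by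
  let L := algebraicClosure K E
  have hL {w : E} (hw : IsAlgebraic K w) : w ∈ L := mem_algebraicClosure_iff.mpr hw
  let P : L[X] := C ⟨D, hL hD⟩ * X ^ 2 + C ⟨p, hL hp⟩ * X + C ⟨q, hL hq⟩
  have hP : P ≠ 0 := ne_zero_of_natDegree_gt (n := 0) <| by
    rw [natDegree_quadratic (ne_of_apply_ne Subtype.val hD0)]; norm_num
  have hzL : IsAlgebraic L z := ⟨P, hP, by simpa [P] using h⟩
  exact IsIntegral.trans_isAlgebraic K hzL.isIntegral

theorem IsAlgebraic.of_sq_add_sq_eq_one {K E : Type*} [Field K] [Field E] [Algebra K E]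
    {u₁ u₂ v₁ v₂ : E} (hu₁ : IsAlgebraic K u₁) (hu₂ : IsAlgebraic K u₂) (hv₁ : IsAlgebraic K v₁)
    (h : (u₂ - u₁) ^ 2 + (v₂ - v₁) ^ 2 = 1) : IsAlgebraic K v₂ := by
  have hsq : IsAlgebraic K ((v₂ - v₁) ^ 2) := by
    rw [show (v₂ - v₁) ^ 2 = 1 - (u₂ - u₁) ^ 2 by linear_combination h]
    exact isAlgebraic_one.sub ((hu₂.sub hu₁).pow 2)
  simpa using (hsq.of_pow two_pos).add hv₁

theorem IsAlgebraic.of_unit_circles {K : Type*} [Field K] [Algebra K ℝ]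
    {p₁ p₂ q₁ q₂ z₁ z₂ : ℝ} (hp₁ : IsAlgebraic K p₁) (hp₂ : IsAlgebraic K p₂)
    (hq₁ : IsAlgebraic K q₁) (hq₂ : IsAlgebraic K q₂) (hpq : (p₁, p₂) ≠ (q₁, q₂))
    (hp : (z₁ - p₁) ^ 2 + (z₂ - p₂) ^ 2 = 1) (hq : (z₁ - q₁) ^ 2 + (z₂ - q₂) ^ 2 = 1) :
    IsAlgebraic K z₁ ∧ IsAlgebraic K z₂ := by
  set d₁ := q₁ - p₁
  set d₂ := q₂ - p₂
  have hd₁ : IsAlgebraic K d₁ := hq₁.sub hp₁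
  have hd₂ : IsAlgebraic K d₂ := hq₂.sub hp₂
  have hd : d₁ ^ 2 + d₂ ^ 2 ≠ 0 := by
    intro h0
    obtain ⟨h₁, h₂⟩ : d₁ = 0 ∧ d₂ = 0 := ⟨by nlinarith [sq_nonneg d₂], by nlinarith [sq_nonneg d₁]⟩
    exact hpq (Prod.ext (sub_eq_zero.mp h₁).symm (sub_eq_zero.mp h₂).symm)
  -- Eliminating `z₂` between the two circle equations leaves a quadratic for `z₁ - p₁`.
  have hw₁ : IsAlgebraic K (z₁ - p₁) := by
    refine IsAlgebraic.of_quadratic_eq_zero (D := 4 * (d₁ ^ 2 + d₂ ^ 2))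
      (p := -4 * d₁ * (d₁ ^ 2 + d₂ ^ 2)) (q := (d₁ ^ 2 + d₂ ^ 2) ^ 2 - 4 * d₂ ^ 2) ?_ ?_ ?_
      (by positivity) ?_
    · exact (isAlgebraic_ofNat 4).mul ((hd₁.pow 2).add (hd₂.pow 2))
    · exact ((isAlgebraic_ofNat 4).neg.mul hd₁).mul ((hd₁.pow 2).add (hd₂.pow 2))
    · exact (((hd₁.pow 2).add (hd₂.pow 2)).pow 2).sub ((isAlgebraic_ofNat 4).mul (hd₂.pow 2))
    · linear_combination (d₁ ^ 2 + d₂ ^ 2 - 2 * (z₁ - p₁) * d₁ + 2 * (z₂ - p₂) * d₂) * (hq - hp)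
        + 4 * d₂ ^ 2 * hp
  have hz₁ : IsAlgebraic K z₁ := by simpa using hw₁.add hp₁
  exact ⟨hz₁, hp₁.of_sq_add_sq_eq_one hz₁ hp₂ hp⟩

theorem isAlgebraic_of_unit_steps {K E : Type*} [Field K] [Field E] [Algebra K E]
    {a b : ℕ → E} {n : ℕ} (ha : ∀ i, 1 ≤ i → i ≤ n → IsAlgebraic K (a i))
    (hb₁ : IsAlgebraic K (b 1))
    (hstep : ∀ i, 1 ≤ i → i < n → (a (i + 1) - a i) ^ 2 + (b (i + 1) - b i) ^ 2 = 1) :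
    ∀ i, 1 ≤ i → i ≤ n → IsAlgebraic K (b i) := by
  intro i hi
  induction i, hi using Nat.le_induction with
  | base => exact fun _ => hb₁
  | succ i hi ih =>
    intro hin
    exact (ha i hi (by omega)).of_sq_add_sq_eq_one (ha (i + 1) (by omega) hin) (ih (by omega))
      (hstep i hi (by omega))

theorem isAlgebraic_of_closed_unit_polygon {K : Type*} [Field K] [Algebra K ℝ]
    {a b : ℕ → ℝ} {n : ℕ} (hn : 1 ≤ n) (ha : ∀ i, 1 ≤ i → i ≤ n → IsAlgebraic K (a i))
    (hb₁ : IsAlgebraic K (b 1))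
    (hstep : ∀ i, 1 ≤ i → i ≤ n → (a (i + 1) - a i) ^ 2 + (b (i + 1) - b i) ^ 2 = 1)
    (hclose : (a (n + 1) - a 1) ^ 2 + (b (n + 1) - b 1) ^ 2 = 1)
    (hne : (a 1, b 1) ≠ (a n, b n)) :
    ∀ i, 1 ≤ i → i ≤ n + 1 → IsAlgebraic K (a i) ∧ IsAlgebraic K (b i) := by
  have hb := isAlgebraic_of_unit_steps ha hb₁ fun i h₁ h₂ => hstep i h₁ h₂.le
  intro i h₁ h₂
  rcases Nat.lt_or_eq_of_le h₂ with h₂ | rfl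
  · exact ⟨ha i h₁ (by omega), hb i h₁ (by omega)⟩
  · exact IsAlgebraic.of_unit_circles (ha 1 le_rfl hn) hb₁ (ha n hn le_rfl) (hb n hn le_rfl) hne
      hclose (hstep n hn le_rfl)

theorem AlgebraicIndependent.enatCard_le_of_isAlgebraic {F E ι κ : Type*} [Field F] [Field E]
    [Algebra F E] {v : ι → E} (hv : AlgebraicIndependent F v) (t : κ → E)
    (h : ∀ i, IsAlgebraic (IntermediateField.adjoin F (range t)) (v i)) :
    ENat.card ι ≤ ENat.card κ := by
  let M := AlgebraicIndependent.matroid F E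
  have hind : M.Indep (range v) :=
    AlgebraicIndependent.matroid_indep_iff.mpr hv.to_subtype_range
  have hsub : range v ⊆ M.closure (range t) := by
    rintro _ ⟨i, rfl⟩
    rw [AlgebraicIndependent.matroid_closure_eq]
    exact IntermediateField.isAlgebraic_adjoin_iff.mp (h i)
  calc ENat.card ι ≤ (range v).encard := hv.injective.encard_range
    _ ≤ M.eRk (M.closure (range t)) := hind.encard_le_eRk_of_subset hsub
    _ = M.eRk (range t) := M.eRk_closure_eq _
    _ ≤ (range t).encard := M.eRk_le_encard _
    _ ≤ ENat.card κ := by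
      rw [← image_univ, ← encard_univ]
      exact encard_image_le t univ

theorem scaled_sq_dist_eq_one {x₁ y₁ r₁ x₂ y₂ r₂ : ℝ} (hr₁ : r₁ ≠ 0) (hr₂ : r₂ ≠ 0)
    (h₁ : x₁ ^ 2 + y₁ ^ 2 = r₁ ^ 2 + 2 * r₁) (h₂ : x₂ ^ 2 + y₂ ^ 2 = r₂ ^ 2 + 2 * r₂)
    (h : √((x₁ - x₂) ^ 2 + (y₁ - y₂) ^ 2) = r₁ + r₂) :
    (x₂ / (2 * r₂) - x₁ / (2 * r₁)) ^ 2 + (y₂ / (2 * r₂) - y₁ / (2 * r₁)) ^ 2 = 1 := by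
  have hsq : (x₁ - x₂) ^ 2 + (y₁ - y₂) ^ 2 = (r₁ + r₂) ^ 2 := by
    rw [← h, Real.sq_sqrt (by positivity)]
  field_simp
  linear_combination (r₁ ^ 2 - r₁ * r₂) * h₂ + (r₂ ^ 2 - r₁ * r₂) * h₁ + r₁ * r₂ * hsq

theorem scaled_ne_of_cross_neg {x₁ y₁ r₁ x₂ y₂ r₂ x₃ y₃ : ℝ} (hr₁ : 0 < r₁) (hr₂ : 0 < r₂)
    (h₂₃ : x₂ * y₃ - y₂ * x₃ < 0) (h₃₁ : x₃ * y₁ - y₃ * x₁ < 0) :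
    (x₁ / (2 * r₁), y₁ / (2 * r₁)) ≠ (x₂ / (2 * r₂), y₂ / (2 * r₂)) := by
  intro h
  obtain ⟨hx, hy⟩ := Prod.mk.inj h
  rw [div_eq_div_iff (by positivity) (by positivity)] at hx hy
  have : r₁ * (x₂ * y₃ - y₂ * x₃) = -(r₂ * (x₃ * y₁ - y₃ * x₁)) := by
    linear_combination (x₃ * hy - y₃ * hx) / 2
  nlinarith [mul_neg_of_pos_of_neg hr₁ h₂₃, mul_neg_of_pos_of_neg hr₂ h₃₁]

theorem isAlgebraic_radius_of_scaled {K : Type*} [Field K] [Algebra K ℝ] {x y r : ℝ} (hr : r ≠ 0)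
    (h : x ^ 2 + y ^ 2 = r ^ 2 + 2 * r) (hx : IsAlgebraic K (x / (2 * r)))
    (hy : IsAlgebraic K (y / (2 * r))) : IsAlgebraic K r := by
  have hq : 4 * ((x / (2 * r)) ^ 2 + (y / (2 * r)) ^ 2) - 1 = 2 / r := by
    field_simp
    linear_combination 4 * h
  have hr' : r = 2 * (4 * ((x / (2 * r)) ^ 2 + (y / (2 * r)) ^ 2) - 1)⁻¹ := by
    rw [hq, inv_div]
    field_simp
  rw [hr']
  exact (isAlgebraic_ofNat 2).mul
    (((isAlgebraic_ofNat 4).mul ((hx.pow 2).add (hy.pow 2))).sub isAlgebraic_one).inv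

/-- The special framework lemma: if points `p_i = (x_i, y_i)` for `1 ≤ i ≤ k` are built
from positive scalars `r_1, …, r_k` so that `‖p_i‖² = r_i² + 2 r_i`, `y_1 = 0`,
consecutive position vectors are linearly independent with `p_{i+1}` clockwise of `p_i`
(and `p_1` clockwise of `p_k`), and `‖p_i − p_{i+1}‖ = r_i + r_{i+1}`, then closing the
cycle `‖p_1 − p_k‖ = r_1 + r_k` forces `(r_1, …, r_k)` to be algebraically dependent
over `ℚ`. -/
theorem special_framework_dependent (k : ℕ) (hk : 3 ≤ k) (r x y : ℕ → ℝ)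
    (hr : ∀ i, 1 ≤ i → i ≤ k → 0 < r i)
    (hnorm : ∀ i, 1 ≤ i → i ≤ k → x i ^ 2 + y i ^ 2 = r i ^ 2 + 2 * r i)
    (hy1 : y 1 = 0)
    (hclock : ∀ i, 1 ≤ i → i ≤ k - 1 → x i * y (i + 1) - y i * x (i + 1) < 0)
    (hclockk : x k * y 1 - y k * x 1 < 0)
    (htouch : ∀ i, 1 ≤ i → i ≤ k - 1 →
      Real.sqrt ((x i - x (i + 1)) ^ 2 + (y i - y (i + 1)) ^ 2) = r i + r (i + 1))
    (hclose : Real.sqrt ((x 1 - x k) ^ 2 + (y 1 - y k) ^ 2) = r 1 + r k) :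
    ¬ AlgebraicIndependent ℚ (fun i : Fin k => r (i.1 + 1)) := by
  intro hind
  obtain ⟨n, rfl⟩ : ∃ n, k = n + 1 := ⟨k - 1, by omega⟩
  have hr₀ i (h₁ : 1 ≤ i) (h₂ : i ≤ n + 1) : r i ≠ 0 := (hr i h₁ h₂).ne'
  set a : ℕ → ℝ := fun i => x i / (2 * r i)
  set b : ℕ → ℝ := fun i => y i / (2 * r i)
  set K := IntermediateField.adjoin ℚ (range fun i : Fin n => a (i + 1))
  have ha i (h₁ : 1 ≤ i) (h₂ : i ≤ n) : IsAlgebraic K (a i) := by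
    obtain ⟨j, rfl⟩ : ∃ j, i = j + 1 := ⟨i - 1, by omega⟩
    exact isAlgebraic_algebraMap
      (⟨a (j + 1), IntermediateField.subset_adjoin ℚ _ ⟨⟨j, by omega⟩, rfl⟩⟩ : K)
  have hb₁ : IsAlgebraic K (b 1) := by simp [b, hy1, isAlgebraic_zero]
  have hside i (h₁ : 1 ≤ i) (h₂ : i ≤ n) : (a (i + 1) - a i) ^ 2 + (b (i + 1) - b i) ^ 2 = 1 :=
    scaled_sq_dist_eq_one (hr₀ i h₁ (by omega)) (hr₀ (i + 1) (by omega) (by omega))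
      (hnorm i h₁ (by omega)) (hnorm (i + 1) (by omega) (by omega)) (htouch i h₁ (by omega))
  have hlast : (a (n + 1) - a 1) ^ 2 + (b (n + 1) - b 1) ^ 2 = 1 :=
    scaled_sq_dist_eq_one (hr₀ 1 le_rfl (by omega)) (hr₀ (n + 1) (by omega) le_rfl)
      (hnorm 1 le_rfl (by omega)) (hnorm (n + 1) (by omega) le_rfl) hclose
  have hne : (a 1, b 1) ≠ (a n, b n) :=
    scaled_ne_of_cross_neg (hr 1 le_rfl (by omega)) (hr n (by omega) (by omega))
      (hclock n (by omega) (by omega)) hclockk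
  have hab := isAlgebraic_of_closed_unit_polygon (by omega) ha hb₁ hside hlast hne
  have hr_alg (i : Fin (n + 1)) : IsAlgebraic K (r (i + 1)) :=
    isAlgebraic_radius_of_scaled (hr₀ _ (by omega) (by omega)) (hnorm _ (by omega) (by omega))
      (hab _ (by omega) (by omega)).1 (hab _ (by omega) (by omega)).2
  have hcard := hind.enatCard_le_of_isAlgebraic _ hr_alg
  simp only [ENat.card_eq_coe_fintype_card, Fintype.card_fin, Nat.cast_le] at hcard
  omega
end

section
/- Let (G,p) be a framework in ℝ^d, let v₀ be a vertex of G having exactly k ≤ d neighbours v₁,…,v_k, and let (G',p') be the framework obtained by deleting the vertex v₀ from G (together with its incident edges) and restricting p to the remaining vertices. If the k+1 points p_{v₀}, p_{v₁}, …, p_{v_k} are not contained in any (k−1)-dimensional affine subspace of ℝ^d (i.e., they are affinely independent), then (G,p) is stress-free if and only if (G',p') is stress-free. -/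
noncomputable section

/-- The framework `(G, p)` is stress-free: every equilibrium stress
(a symmetric assignment of scalars to edges whose weighted differences sum to zero
at every vertex) is identically zero. -/
def IsStressFree {V : Type*} [Fintype V] {d : ℕ} (G : SimpleGraph V)
    (p : V → EuclideanSpace ℝ (Fin d)) : Prop :=
  ∀ σ : V → V → ℝ,
    (∀ v w, σ v w = σ w v) →
    (∀ v w, ¬ G.Adj v w → σ v w = 0) →
    (∀ v, ∑ w : V, σ v w • (p v - p w) = 0) →
    ∀ v w, σ v w = 0

/-- Deleting a vertex `v₀` of degree `k ≤ d` whose point together with the points of its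
neighbours is affinely independent preserves (and reflects) being stress-free. -/
theorem stressFree_iff_delete_vertex {V : Type*} [Fintype V] [DecidableEq V]
    {d k : ℕ} (hk : k ≤ d) (G : SimpleGraph V) (p : V → EuclideanSpace ℝ (Fin d))
    (v₀ : V) (vs : Fin k → V) (hinj : Function.Injective vs)
    (hnbr : G.neighborSet v₀ = Set.range vs)
    (haff : AffineIndependent ℝ
      (Fin.cons (p v₀) (p ∘ vs) : Fin (k + 1) → EuclideanSpace ℝ (Fin d))) :
    (IsStressFree G p ↔
      IsStressFree (G.induce {v : V | v ≠ v₀}) (fun v => p v)) := by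
  classical
  -- linear independence of the edge directions at v₀
  have hli : LinearIndependent ℝ (fun i : Fin k => p (vs i) - p v₀) := by
    have h := (affineIndependent_iff_linearIndependent_vsub ℝ
      (Fin.cons (p v₀) (p ∘ vs) : Fin (k + 1) → EuclideanSpace ℝ (Fin d)) 0).mp haff
    have h2 := h.comp (fun i : Fin k => (⟨i.succ, Fin.succ_ne_zero i⟩ : {x : Fin (k+1) // x ≠ 0}))
      (fun a b hab => by
        have := congrArg Subtype.val hab
        simpa [Fin.succ_inj] using this)
    have hfe : (fun i : Fin k => p (vs i) - p v₀) =
        (fun i : {x : Fin (k+1) // x ≠ 0} =>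
          (Fin.cons (p v₀) (p ∘ vs) : Fin (k+1) → EuclideanSpace ℝ (Fin d)) i -ᵥ
          (Fin.cons (p v₀) (p ∘ vs) : Fin (k+1) → EuclideanSpace ℝ (Fin d)) 0) ∘
        (fun i : Fin k => (⟨i.succ, Fin.succ_ne_zero i⟩ : {x : Fin (k+1) // x ≠ 0})) := by
      funext i
      simp [Fin.cons_succ, Fin.cons_zero, vsub_eq_sub]
    rw [hfe]
    exact h2
  -- sum splitting
  have hsplit : ∀ (f : V → EuclideanSpace ℝ (Fin d)),
      ∑ w : V, f w = f v₀ + ∑ w : {v : V | v ≠ v₀}, f w := by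
    intro f
    rw [← Finset.add_sum_erase Finset.univ f (Finset.mem_univ v₀)]
    congr 1
    rw [← Finset.sum_subtype (Finset.univ.erase v₀)
      (p := fun v => v ∈ {v : V | v ≠ v₀}) (by simp) f]
  have hAdj : ∀ w, G.Adj v₀ w ↔ w ∈ Set.range vs := by
    intro w
    rw [← hnbr, SimpleGraph.mem_neighborSet]
  constructor
  · intro hG σ' hsym' hadj' heq'
    set σ : V → V → ℝ := fun v w =>
      if h : v ≠ v₀ ∧ w ≠ v₀ then σ' ⟨v, h.1⟩ ⟨w, h.2⟩ else 0 with hσ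
    have h0 : ∀ w, σ v₀ w = 0 := fun w => by simp [hσ]
    have h0' : ∀ w, σ w v₀ = 0 := fun w => by simp [hσ]
    have := hG σ
      (fun v w => by
        by_cases h : v ≠ v₀ ∧ w ≠ v₀
        · simp [hσ, h, h.1, h.2, hsym' ⟨v, h.1⟩ ⟨w, h.2⟩]
        · push_neg at h
          by_cases hv : v = v₀
          · subst hv; simp [hσ]
          · simp [hσ, hv, h hv])
      (fun v w hvw => by
        by_cases h : v ≠ v₀ ∧ w ≠ v₀
        · simp only [hσ, dif_pos h]
          exact hadj' _ _ (by simpa using hvw)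
        · simp [hσ, h])
      (fun v => by
        by_cases hv : v = v₀
        · subst hv; simp [h0]
        · rw [hsplit (fun w => σ v w • (p v - p w))]
          rw [h0' v, zero_smul, zero_add]
          have := heq' ⟨v, hv⟩
          convert this using 1
          apply Finset.sum_congr rfl
          intro w _
          have hw : (w : V) ≠ v₀ := w.2
          simp [hσ, hv, hw])
    intro a b
    have h := this a b
    simp only [hσ, dite_eq_ite] at h
    rw [dif_pos ⟨a.2, b.2⟩] at h
    exact h
  · intro hG' σ hsym hadj heq
    -- first: all stresses at v₀ vanish
    have hv₀ : ∀ w, σ v₀ w = 0 := by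
      have hzero : ∀ w, w ∉ Finset.univ.image vs → σ v₀ w = 0 := by
        intro w hw
        apply hadj
        intro hA
        exact hw (Finset.mem_image.mpr (by
          obtain ⟨i, hi⟩ := (hAdj w).mp hA
          exact ⟨i, Finset.mem_univ i, hi⟩))
      have hsum : ∑ i : Fin k, σ v₀ (vs i) • (p v₀ - p (vs i)) = 0 := by
        have h1 : ∑ w ∈ Finset.univ.image vs, σ v₀ w • (p v₀ - p w)
            = ∑ w : V, σ v₀ w • (p v₀ - p w) :=
          Finset.sum_subset (Finset.subset_univ _)
            (fun w _ hw => by rw [hzero w hw, zero_smul])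
        have h2 : ∑ w ∈ Finset.univ.image vs, σ v₀ w • (p v₀ - p w)
            = ∑ i : Fin k, σ v₀ (vs i) • (p v₀ - p (vs i)) :=
          Finset.sum_image (fun a _ b _ h => hinj h)
        rw [← h2, h1]
        exact heq v₀
      have hsum' : ∑ i : Fin k, (σ v₀ (vs i)) • (p (vs i) - p v₀) = 0 := by
        have : ∑ i : Fin k, (σ v₀ (vs i)) • (p (vs i) - p v₀)
            = - ∑ i : Fin k, σ v₀ (vs i) • (p v₀ - p (vs i)) := by
          rw [← Finset.sum_neg_distrib]
          apply Finset.sum_congr rfl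
          intro i _
          rw [← smul_neg, neg_sub]
        rw [this, hsum, neg_zero]
      have hz := linearIndependent_iff'.mp hli Finset.univ (fun i => σ v₀ (vs i)) hsum'
      intro w
      by_cases hw : w ∈ Finset.univ.image vs
      · obtain ⟨i, _, rfl⟩ := Finset.mem_image.mp hw
        exact hz i (Finset.mem_univ i)
      · exact hzero w hw
    have hv₀' : ∀ w, σ w v₀ = 0 := fun w => (hsym w v₀).trans (hv₀ w)
    have := hG' (fun a b => σ a b)
      (fun a b => hsym a b)
      (fun a b hab => hadj a b (by simpa using hab))
      (fun a => by
        have hsum := heq a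
        rw [hsplit (fun w => σ a w • (p a - p w)), hv₀' a, zero_smul, zero_add] at hsum
        exact hsum)
    intro v w
    by_cases hv : v = v₀
    · subst hv; exact hv₀ w
    by_cases hw : w = v₀
    · subst hw; exact hv₀' v
    exact this ⟨v, hv⟩ ⟨w, hw⟩

end
end

section
/- Let G=(V,E) be a graph, let K₂ be the complete graph with vertices a,b, and let P = (G ⊕ K₂, p, r) be a 3-dimensional sphere packing with generic radii. Then there exists a Möbius-equivalent sphere packing P' = (G ⊕ K₂, p', r') such that r'_a > r'_v and r'_b > r'_v for all v ∈ V. -/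
noncomputable section

/-- The join `G ⊕ K₂` of `G` with the complete graph on two new vertices
(the two elements of `Fin 2`). -/
def joinK2 {V : Type*} (G : SimpleGraph V) : SimpleGraph (V ⊕ Fin 2) where
  Adj x y :=
    match x, y with
    | Sum.inl u, Sum.inl v => G.Adj u v
    | Sum.inl _, Sum.inr _ => True
    | Sum.inr _, Sum.inl _ => True
    | Sum.inr i, Sum.inr j => i ≠ j
  symm := by
    constructor
    rintro (u | i) (v | j) h
    · exact h.symm
    · trivial
    · trivial
    · exact h.symm
  loopless := by
    constructor
    rintro (u | i) h
    · exact G.ne_of_adj h rfl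
    · exact h rfl

/-- A 3-dimensional Möbius transform with singularity `b₀`:
`φ(u) = a₀ + λ A(u − b₀) / ‖u − b₀‖^τ` with `λ ≠ 0`, `τ ∈ {0, 2}` and `A` a linear
isometry of `ℝ³`. -/
def IsMobiusMap (φ : EuclideanSpace ℝ (Fin 3) → EuclideanSpace ℝ (Fin 3))
    (b₀ : EuclideanSpace ℝ (Fin 3)) : Prop :=
  ∃ (a₀ : EuclideanSpace ℝ (Fin 3)) (lam : ℝ)
    (A : EuclideanSpace ℝ (Fin 3) ≃ₗᵢ[ℝ] EuclideanSpace ℝ (Fin 3)) (τ : ℕ),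
    lam ≠ 0 ∧ (τ = 0 ∨ τ = 2) ∧
    ∀ u, u ≠ b₀ → φ u = a₀ + (lam / ‖u - b₀‖ ^ τ) • A (u - b₀)

/-- Two sphere packings (given by centres and radii over the same vertex set) are
Möbius-equivalent if some Möbius transform maps each sphere of the first packing onto
the corresponding sphere of the second. -/
def MobiusEquivalent {V : Type*} (p p' : V → EuclideanSpace ℝ (Fin 3))
    (r r' : V → ℝ) : Prop :=
  ∃ φ b₀, IsMobiusMap φ b₀ ∧
    ∀ v : V, b₀ ∉ Metric.sphere (p v) (r v) ∧
      φ '' Metric.sphere (p v) (r v) = Metric.sphere (p' v) (r' v)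

/-!
Let `t` be the point where the spheres `a` and `b` touch. Every other sphere is disjoint from the
interiors of both, so by Stewart's theorem `t` lies strictly outside it. Invert in the unit sphere
about `c = t + ε n` with `n ⟂ p b - p a`. For small `ε ≠ 0` the point `c` lies outside every
sphere, so the inversion maps each sphere `(q, R)` to a sphere of radius `R / pow(c)` and
multiplies every quantity `dist² - (R + R')²` by a positive factor; hence the contact graph is
preserved. The powers of `c` with respect to `a` and `b` are `ε² ‖n‖² → 0`, while those with
respect to the other spheres stay bounded away from `0`, so the images of `a` and `b` become the
largest spheres.
-/

open RealInnerProductSpace EuclideanGeometry Filter Topology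

section

variable {E : Type*} [NormedAddCommGroup E] [InnerProductSpace ℝ E]

/-- Stewart's theorem. -/
theorem dist_sq_lineMap (x a b : E) (t : ℝ) :
    dist x (AffineMap.lineMap a b t) ^ 2
      = (1 - t) * dist x a ^ 2 + t * dist x b ^ 2 - t * (1 - t) * dist a b ^ 2 := by
  have hx : x - AffineMap.lineMap a b t = (1 - t) • (x - a) + t • (x - b) := by
    rw [AffineMap.lineMap_apply_module]; module
  have hab : dist a b = ‖(x - a) - (x - b)‖ := by rw [sub_sub_sub_cancel_left, dist_eq_norm']
  rw [dist_eq_norm, hx, hab, dist_eq_norm, dist_eq_norm, norm_add_sq_real,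
    norm_sub_sq_real (x - a),
    norm_smul, norm_smul, real_inner_smul_left, real_inner_smul_right, Real.norm_eq_abs,
    Real.norm_eq_abs, mul_pow, mul_pow, sq_abs, sq_abs]
  ring

theorem radius_lt_dist_lineMap {x a b : E} {rx ra rb : ℝ} (hx : 0 < rx) (ha : 0 < ra)
    (hb : 0 < rb) (hab : dist a b = ra + rb) (hxa : rx + ra ≤ dist x a)
    (hxb : rx + rb ≤ dist x b) : rx < dist x (AffineMap.lineMap a b (ra / (ra + rb))) := by
  have hs : 0 < ra + rb := add_pos ha hb
  have hda : (rx + ra) ^ 2 ≤ dist x a ^ 2 := pow_le_pow_left₀ (by positivity) hxa 2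
  have hdb : (rx + rb) ^ 2 ≤ dist x b ^ 2 := pow_le_pow_left₀ (by positivity) hxb 2
  -- the squared distance is at least `rx ^ 2 + 4 * ra * rb * rx / (ra + rb)`
  rw [← sq_lt_sq₀ hx.le dist_nonneg, dist_sq_lineMap, hab,
    show ∀ da db : ℝ, (1 - ra / (ra + rb)) * da + ra / (ra + rb) * db
        - ra / (ra + rb) * (1 - ra / (ra + rb)) * (ra + rb) ^ 2
        = (rb * da + ra * db) / (ra + rb) - ra * rb by intro da db; field_simp; ring,
    lt_sub_iff_add_lt, lt_div_iff₀ hs]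
  nlinarith [mul_pos (mul_pos ha hb) hx]

theorem dist_lineMap_of_dist_eq_add {a b : E} {ra rb : ℝ} (ha : 0 < ra) (hb : 0 < rb)
    (hab : dist a b = ra + rb) :
    dist (AffineMap.lineMap a b (ra / (ra + rb))) a = ra ∧
      dist (AffineMap.lineMap a b (ra / (ra + rb))) b = rb := by
  have hs : ra + rb ≠ 0 := (add_pos ha hb).ne'
  rw [dist_lineMap_left, dist_lineMap_right, hab, one_sub_div hs, add_sub_cancel_left,
    Real.norm_of_nonneg (by positivity), Real.norm_of_nonneg (by positivity),
    div_mul_cancel₀ _ hs, div_mul_cancel₀ _ hs]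
  exact ⟨rfl, rfl⟩

theorem inner_sub_lineMap_eq_zero {a b n : E} (h : ⟪b - a, n⟫ = 0) (μ : ℝ) :
    ⟪a - AffineMap.lineMap a b μ, n⟫ = 0 ∧ ⟪b - AffineMap.lineMap a b μ, n⟫ = 0 := by
  have ha : a - AffineMap.lineMap a b μ = (-μ) • (b - a) := by
    rw [AffineMap.lineMap_apply_module']; module
  have hb : b - AffineMap.lineMap a b μ = (1 - μ) • (b - a) := by
    rw [AffineMap.lineMap_apply_module']; module
  rw [ha, hb, real_inner_smul_left, real_inner_smul_left, h, mul_zero, mul_zero]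
  exact ⟨rfl, rfl⟩

theorem norm_inv_smul_sub_inv_smul {u q : E} {R : ℝ} (hR : 0 ≤ R) (huq : ‖u - q‖ = R)
    (hq : ‖q‖ ^ 2 - R ^ 2 ≠ 0) :
    ‖(‖u‖ ^ 2)⁻¹ • u - (‖q‖ ^ 2 - R ^ 2)⁻¹ • q‖ = R / |‖q‖ ^ 2 - R ^ 2| := by
  have hu : ‖u‖ ≠ 0 := by
    rintro hu
    rw [norm_eq_zero.1 hu, zero_sub, norm_neg] at huq
    exact hq (by rw [huq, sub_self])
  rw [← sq_eq_sq₀ (norm_nonneg _) (by positivity), div_pow, sq_abs, norm_sub_sq_real,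
    norm_smul, norm_smul, real_inner_smul_left, real_inner_smul_right, Real.norm_eq_abs,
    Real.norm_eq_abs, mul_pow, mul_pow, sq_abs, sq_abs]
  rw [← huq, norm_sub_sq_real] at hq ⊢
  field_simp
  ring

theorem exists_ne_zero_inner_eq_zero [FiniteDimensional ℝ E] (hE : 1 < Module.finrank ℝ E)
    (y : E) : ∃ n : E, n ≠ 0 ∧ ⟪y, n⟫ = 0 := by
  have hdim := (ℝ ∙ y).finrank_add_finrank_orthogonal
  have hy : Module.finrank ℝ (ℝ ∙ y) ≤ 1 := by simpa using finrank_span_le_card ({y} : Set E)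
  obtain ⟨n, hn, hn0⟩ := Submodule.exists_mem_ne_zero_of_ne_bot (p := (ℝ ∙ y)ᗮ) fun h => by
    rw [h, finrank_bot] at hdim
    omega
  exact ⟨n, hn0, Submodule.inner_right_of_mem_orthogonal (Submodule.mem_span_singleton_self y) hn⟩

end

namespace EuclideanGeometry.Sphere

variable {E : Type*} [NormedAddCommGroup E] [InnerProductSpace ℝ E]

/-- The image of `s` under `inversion c 1` when `s.power c ≠ 0` (see `image_inversion`);
if `c ∈ s` this is the junk sphere of radius `0` about `c`. -/
def invert (s : Sphere E) (c : E) : Sphere E :=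
  ⟨c + (s.power c)⁻¹ • (s.center - c), s.radius / |s.power c|⟩

variable {s : Sphere E} {c : E}

lemma inversion_mem_invert (hs : s.power c ≠ 0) {x : E} (hx : x ∈ s) :
    inversion c 1 x ∈ s.invert c := by
  rw [mem_sphere] at hx
  have key := norm_inv_smul_sub_inv_smul (u := x - c) (q := s.center - c) (hx ▸ dist_nonneg)
    (by rwa [sub_sub_sub_cancel_right, ← dist_eq_norm]) (by rwa [power, dist_eq_norm'] at hs)
  simp only [mem_sphere, invert, inversion, power, dist_comm c, dist_eq_norm, vsub_eq_sub,
    vadd_eq_add, one_div, inv_pow, ← key]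
  congr 1
  abel

lemma radius_invert_of_power_pos (hs : 0 < s.power c) :
    (s.invert c).radius = s.radius / s.power c := by
  rw [invert, abs_of_pos hs]

lemma power_invert (hs : s.power c ≠ 0) : (s.invert c).power c = (s.power c)⁻¹ := by
  rw [power, invert, power, dist_eq_norm', dist_eq_norm', add_sub_cancel_left, norm_smul,
    Real.norm_eq_abs, div_pow, sq_abs, mul_pow, sq_abs]
  rw [power, dist_eq_norm'] at hs
  field_simp

lemma invert_invert (hs : s.power c ≠ 0) : (s.invert c).invert c = s := by
  have hP := power_invert hs
  ext
  · rw [invert, hP, inv_inv, invert, add_sub_cancel_left, smul_smul, mul_inv_cancel₀ hs,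
      one_smul, add_sub_cancel]
  · rw [invert, hP, invert, abs_inv, div_inv_eq_mul, div_mul_cancel₀ _ (abs_ne_zero.2 hs)]

theorem image_inversion (hs : s.power c ≠ 0) :
    inversion c 1 '' Metric.sphere s.center s.radius
      = Metric.sphere (s.invert c).center (s.invert c).radius := by
  refine (Set.image_subset_iff.2 fun x => inversion_mem_invert hs).antisymm fun y hy => ?_
  refine ⟨inversion c 1 y, ?_, inversion_inversion c one_ne_zero y⟩
  rw [← invert_invert hs]
  exact inversion_mem_invert (by rw [power_invert hs]; exact inv_ne_zero hs) hy

theorem dist_center_invert_sq_sub_sq {s₁ s₂ : Sphere E} (h : 0 < s₁.power c * s₂.power c) :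
    dist (s₁.invert c).center (s₂.invert c).center ^ 2
        - ((s₁.invert c).radius + (s₂.invert c).radius) ^ 2
      = (dist s₁.center s₂.center ^ 2 - (s₁.radius + s₂.radius) ^ 2)
        / (s₁.power c * s₂.power c) := by
  have h₁ : s₁.power c ≠ 0 := left_ne_zero_of_mul h.ne'
  have h₂ : s₂.power c ≠ 0 := right_ne_zero_of_mul h.ne'
  have hradii : (s₁.invert c).radius * (s₂.invert c).radius
      = s₁.radius * s₂.radius / (s₁.power c * s₂.power c) := by
    rw [invert, invert, div_mul_div_comm, ← abs_mul, abs_of_pos h]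
  have hcenter : dist s₁.center s₂.center = ‖(s₁.center - c) - (s₂.center - c)‖ := by
    rw [sub_sub_sub_cancel_right, dist_eq_norm]
  have hu₁ : ‖s₁.center - c‖ ^ 2 = s₁.power c + s₁.radius ^ 2 := by
    rw [power, dist_eq_norm']; ring
  have hu₂ : ‖s₂.center - c‖ ^ 2 = s₂.power c + s₂.radius ^ 2 := by
    rw [power, dist_eq_norm']; ring
  rw [add_sq, mul_assoc, hradii, invert, invert, dist_eq_norm, add_sub_add_left_eq_sub, hcenter,
    norm_sub_sq_real, norm_sub_sq_real, norm_smul, norm_smul, real_inner_smul_left,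
    real_inner_smul_right, Real.norm_eq_abs, Real.norm_eq_abs, mul_pow, mul_pow, sq_abs, sq_abs,
    div_pow, div_pow, sq_abs, sq_abs, hu₁, hu₂]
  field_simp
  ring

theorem power_add_smul_of_mem {t n : E} (ht : t ∈ s)
    (hn : ⟪s.center - t, n⟫ = 0) (ε : ℝ) : s.power (t + ε • n) = ε ^ 2 * ‖n‖ ^ 2 := by
  have hn' : ⟪t - s.center, n⟫ = 0 := by rw [← neg_sub, inner_neg_left, hn, neg_zero]
  rw [Sphere.power, ← mem_sphere.1 ht, dist_eq_norm, dist_eq_norm, add_sub_right_comm,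
    norm_add_sq_real, real_inner_smul_right, hn', norm_smul, Real.norm_eq_abs, mul_pow, sq_abs]
  ring

theorem tendsto_power_add_smul (s : Sphere E) (t n : E) :
    Tendsto (fun ε : ℝ => s.power (t + ε • n)) (𝓝 0) (𝓝 (s.power t)) :=
  (by unfold power; fun_prop : Continuous fun ε : ℝ => s.power (t + ε • n)).tendsto' 0 _
    (by rw [zero_smul, add_zero])

theorem eventually_radius_div_power_lt {s S : Sphere E} {t n : E} (hs : s.power t ≠ 0)
    (hS : 0 < S.radius) (hSt : t ∈ S) (hn : n ≠ 0) (hSn : ⟪S.center - t, n⟫ = 0) :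
    ∀ᶠ ε in 𝓝[≠] (0 : ℝ), s.radius / s.power (t + ε • n) < S.radius / S.power (t + ε • n) := by
  have hsmall : Tendsto (fun ε : ℝ => ε ^ 2 * ‖n‖ ^ 2) (𝓝[≠] 0) (𝓝[>] 0) := by
    refine tendsto_nhdsWithin_iff.2 ⟨?_, eventually_nhdsWithin_of_forall fun ε hε => ?_⟩
    · exact tendsto_nhdsWithin_of_tendsto_nhds
        ((by fun_prop : Continuous fun ε : ℝ => ε ^ 2 * ‖n‖ ^ 2).tendsto' 0 0 (by simp))
    · have : ε ≠ 0 := hε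
      have : 0 < ‖n‖ := norm_pos_iff.2 hn
      exact Set.mem_Ioi.2 (by positivity)
  have hlarge : Tendsto (fun ε : ℝ => S.radius / S.power (t + ε • n)) (𝓝[≠] 0) atTop := by
    simp_rw [power_add_smul_of_mem hSt hSn, div_eq_mul_inv]
    exact hsmall.inv_tendsto_nhdsGT_zero.const_mul_atTop hS
  filter_upwards [nhdsWithin_le_nhds ((tendsto_const_nhds.div (s.tendsto_power_add_smul t n)
      hs).eventually (gt_mem_nhds (lt_add_one (s.radius / s.power t)))),
    hlarge.eventually_gt_atTop (s.radius / s.power t + 1)] with ε hlt hgt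
  exact hlt.trans hgt

theorem exists_power_pos_radius_div_power_lt {ι κ : Type*} [Finite ι] [Finite κ]
    {s : ι → Sphere E} {S : κ → Sphere E} {t n : E} (hs : ∀ i, 0 < (s i).power t)
    (hS : ∀ k, 0 < (S k).radius) (hSt : ∀ k, t ∈ S k) (hn : n ≠ 0)
    (hSn : ∀ k, ⟪(S k).center - t, n⟫ = 0) :
    ∃ c : E, (∀ i, 0 < (s i).power c) ∧ (∀ k, 0 < (S k).power c) ∧
      ∀ i k, (s i).radius / (s i).power c < (S k).radius / (S k).power c := by
  have hpos : ∀ᶠ ε in 𝓝[≠] (0 : ℝ), ∀ i, 0 < (s i).power (t + ε • n) :=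
    nhdsWithin_le_nhds <| eventually_all.2 fun i =>
      ((s i).tendsto_power_add_smul t n).eventually (lt_mem_nhds (hs i))
  have hlt : ∀ᶠ ε in 𝓝[≠] (0 : ℝ), ∀ i k,
      (s i).radius / (s i).power (t + ε • n) < (S k).radius / (S k).power (t + ε • n) :=
    eventually_all.2 fun i => eventually_all.2 fun k =>
      eventually_radius_div_power_lt (hs i).ne' (hS k) (hSt k) hn (hSn k)
  obtain ⟨ε, hε, hpos, hlt⟩ := (eventually_mem_nhdsWithin.and (hpos.and hlt)).exists
  have : 0 < ‖n‖ := norm_pos_iff.2 hn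
  refine ⟨t + ε • n, hpos, fun k => ?_, hlt⟩
  rw [power_add_smul_of_mem (hSt k) (hSn k)]
  have : ε ≠ 0 := hε
  positivity

end EuclideanGeometry.Sphere

section Packing

variable {V : Type*} {d : ℕ} {G : SimpleGraph V} {p : V → EuclideanSpace ℝ (Fin d)} {r : V → ℝ}

theorem isSpherePacking_iff_sq_dist_sub_sq :
    IsSpherePacking d G p r ↔ (∀ v, 0 < r v) ∧ ∀ v w, v ≠ w →
      0 ≤ dist (p v) (p w) ^ 2 - (r v + r w) ^ 2 ∧
        (dist (p v) (p w) ^ 2 - (r v + r w) ^ 2 = 0 ↔ G.Adj v w) := by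
  refine and_congr_right fun hr => forall₂_congr fun v w => imp_congr_right fun _ => ?_
  have hvw : 0 ≤ r v + r w := (add_pos (hr v) (hr w)).le
  rw [sub_nonneg, sub_eq_zero, sq_le_sq₀ hvw dist_nonneg, sq_eq_sq₀ dist_nonneg hvw]

theorem IsSpherePacking.of_sq_dist_sub_sq_eq_mul {p' : V → EuclideanSpace ℝ (Fin d)}
    {r' : V → ℝ} (h : IsSpherePacking d G p r) (hr' : ∀ v, 0 < r' v)
    (hgap : ∀ v w, v ≠ w → ∃ k : ℝ, 0 < k ∧
      dist (p' v) (p' w) ^ 2 - (r' v + r' w) ^ 2 = k * (dist (p v) (p w) ^ 2 - (r v + r w) ^ 2)) :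
    IsSpherePacking d G p' r' := by
  rw [isSpherePacking_iff_sq_dist_sub_sq] at h ⊢
  refine ⟨hr', fun v w hvw => ?_⟩
  obtain ⟨k, hk, hkgap⟩ := hgap v w hvw
  rw [hkgap, mul_nonneg_iff_of_pos_left hk, mul_eq_zero, or_iff_right hk.ne']
  exact h.2 v w hvw

theorem IsSpherePacking.invert (h : IsSpherePacking d G p r) {c : EuclideanSpace ℝ (Fin d)}
    (hc : ∀ v, 0 < (⟨p v, r v⟩ : Sphere _).power c) :
    IsSpherePacking d G (fun v => ((⟨p v, r v⟩ : Sphere _).invert c).center)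
      (fun v => ((⟨p v, r v⟩ : Sphere _).invert c).radius) := by
  refine h.of_sq_dist_sub_sq_eq_mul
    (fun v => (Sphere.radius_invert_of_power_pos (hc v)).trans_gt (div_pos (h.1 v) (hc v)))
    fun v w _ => ⟨_, inv_pos.2 (mul_pos (hc v) (hc w)), ?_⟩
  rw [Sphere.dist_center_invert_sq_sub_sq (mul_pos (hc v) (hc w)), div_eq_inv_mul]

end Packing

theorem isMobiusMap_inversion (c : EuclideanSpace ℝ (Fin 3)) : IsMobiusMap (inversion c 1) c :=
  ⟨c, 1, LinearIsometryEquiv.refl ℝ _, 2, one_ne_zero, Or.inr rfl, fun u _ => by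
    rw [inversion, LinearIsometryEquiv.coe_refl, id, dist_eq_norm, vsub_eq_sub, vadd_eq_add,
      div_pow, one_pow, add_comm]⟩

theorem mobiusEquivalent_invert {V : Type*} (p : V → EuclideanSpace ℝ (Fin 3)) (r : V → ℝ)
    {c : EuclideanSpace ℝ (Fin 3)} (hc : ∀ v, (⟨p v, r v⟩ : Sphere _).power c ≠ 0) :
    MobiusEquivalent p (fun v => ((⟨p v, r v⟩ : Sphere _).invert c).center) r
      (fun v => ((⟨p v, r v⟩ : Sphere _).invert c).radius) := by
  refine ⟨inversion c 1, c, isMobiusMap_inversion c, fun v => ⟨fun hcv => hc v ?_, ?_⟩⟩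
  · rw [Sphere.power, Metric.mem_sphere.1 hcv, sub_self]
  · convert Sphere.image_inversion (hc v) using 2

theorem mobius_equiv_large_K2_general {V : Type*} [Fintype V] (G : SimpleGraph V)
    (p : V ⊕ Fin 2 → EuclideanSpace ℝ (Fin 3)) (r : V ⊕ Fin 2 → ℝ)
    (hP : IsSpherePacking 3 (joinK2 G) p r) :
    ∃ (p' : V ⊕ Fin 2 → EuclideanSpace ℝ (Fin 3)) (r' : V ⊕ Fin 2 → ℝ),
      IsSpherePacking 3 (joinK2 G) p' r' ∧ MobiusEquivalent p p' r r' ∧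
      ∀ v : V, r' (Sum.inl v) < r' (Sum.inr 0) ∧ r' (Sum.inl v) < r' (Sum.inr 1) := by
  let s : V ⊕ Fin 2 → Sphere (EuclideanSpace ℝ (Fin 3)) := fun w => ⟨p w, r w⟩
  let t := AffineMap.lineMap (p (.inr 0)) (p (.inr 1)) (r (.inr 0) / (r (.inr 0) + r (.inr 1)))
  have hab : dist (p (.inr 0)) (p (.inr 1)) = r (.inr 0) + r (.inr 1) :=
    (hP.2 _ _ (by simp)).2.2 (by simp [joinK2])
  obtain ⟨n, hn, hpn⟩ := exists_ne_zero_inner_eq_zero (by simp) (p (.inr 1) - p (.inr 0))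
  have hV : ∀ v : V, 0 < (s (.inl v)).power t := fun v =>
    (Sphere.power_pos_iff_radius_lt_dist_center (hP.1 _).le).2 <| by
      rw [dist_comm]
      exact radius_lt_dist_lineMap (hP.1 _) (hP.1 _) (hP.1 _) hab (hP.2 _ _ (by simp)).1
        (hP.2 _ _ (by simp)).1
  have ht := dist_lineMap_of_dist_eq_add (hP.1 _) (hP.1 _) hab
  have hnt := inner_sub_lineMap_eq_zero hpn (r (.inr 0) / (r (.inr 0) + r (.inr 1)))
  have hK2 : ∀ i : Fin 2, t ∈ s (.inr i) ∧ ⟪(s (.inr i)).center - t, n⟫ = 0 :=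
    Fin.forall_fin_two.2 ⟨⟨ht.1, hnt.1⟩, ⟨ht.2, hnt.2⟩⟩
  obtain ⟨c, hVpos, hK2pos, hlt⟩ := Sphere.exists_power_pos_radius_div_power_lt hV
    (fun i => hP.1 (.inr i)) (fun i => (hK2 i).1) hn (fun i => (hK2 i).2)
  have hpos : ∀ w, 0 < (s w).power c := Sum.forall.2 ⟨hVpos, hK2pos⟩
  have hradius : ∀ v i, ((s (.inl v)).invert c).radius < ((s (.inr i)).invert c).radius :=
    fun v i => by
      rw [Sphere.radius_invert_of_power_pos (hpos _), Sphere.radius_invert_of_power_pos (hpos _)]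
      exact hlt v i
  exact ⟨_, _, hP.invert hpos, mobiusEquivalent_invert p r fun w => (hpos w).ne',
    fun v => ⟨hradius v 0, hradius v 1⟩⟩

/-- Any generic-radii sphere packing with contact graph `G ⊕ K₂` is Möbius-equivalent to
one in which the two spheres of `K₂` are strictly larger than all the others. -/
theorem mobius_equiv_large_K2 {V : Type*} [Fintype V] (G : SimpleGraph V)
    (p : V ⊕ Fin 2 → EuclideanSpace ℝ (Fin 3)) (r : V ⊕ Fin 2 → ℝ)
    (hP : IsSpherePacking 3 (joinK2 G) p r) (hr : GenericRadii r) :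
    ∃ (p' : V ⊕ Fin 2 → EuclideanSpace ℝ (Fin 3)) (r' : V ⊕ Fin 2 → ℝ),
      IsSpherePacking 3 (joinK2 G) p' r' ∧ MobiusEquivalent p p' r r' ∧
      ∀ v : V, r' (Sum.inl v) < r' (Sum.inr 0) ∧ r' (Sum.inl v) < r' (Sum.inr 1) :=
  mobius_equiv_large_K2_general G p r hP

end
end

section
/- Let d ≥ 1 and suppose there exists a stress-free d-dimensional sphere packing with contact graph G=(V,E). Then the set radii_d(G) has non-empty interior in ℝ^V, and there exists a d-dimensional sphere packing with contact graph G and generic radii. -/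
/-!
Orient the edges of `G` and consider the map sending centres `q` to the squared edge lengths
`‖q v - q w‖²`. Its derivative at `p` is the rigidity map, whose transpose sends edge tensions
to the resultant forces at the vertices; so a stress-free `p` makes the rigidity map onto, and
by the inverse function theorem every squared-length vector near that of `p` is attained by
centres near `p`. For radii `s` near `r`, solving for the lengths `s v + s w` on edges gives
centres at which non-adjacent spheres stay apart, so `radii_d(G)` is a neighbourhood of `r`.
Generic radii then exist because algebraically independent tuples are dense in `ℝ^V`: their
complement is a countable union of zero sets of nonzero polynomials, each nowhere dense.
-/

open Filter Topology
open scoped RealInnerProductSpace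

noncomputable section

/-- The set of radii vectors admitting a `d`-dimensional sphere packing
with contact graph `G`. -/
def radiiSet {V : Type*} (d : ℕ) (G : SimpleGraph V) : Set (V → ℝ) :=
  {r | ∃ p, IsSpherePacking d G p r}

theorem MvPolynomial.eq_zero_of_eqOn_zero_of_isOpen {σ : Type*} [Fintype σ]
    {P : MvPolynomial σ ℝ} {U : Set (σ → ℝ)} (hU : IsOpen U) (hne : U.Nonempty)
    (h : Set.EqOn (fun x => eval x P) 0 U) : P = 0 := by
  obtain ⟨y, hy⟩ := hne
  obtain ⟨ε, hε, hball⟩ := Metric.isOpen_iff.1 hU y hy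
  refine funext_set (fun i => Metric.ball (y i) ε) (fun i => ?_) fun x hx => ?_
  · rw [Real.ball_eq_Ioo]
    exact Set.Ioo_infinite (by linarith)
  · rw [map_zero]
    exact h (hball (by rwa [ball_pi y hε]))

theorem dense_setOf_algebraicIndependent {σ : Type*} [Fintype σ] :
    Dense {x : σ → ℝ | AlgebraicIndependent ℚ x} := by
  have : Countable (MvPolynomial σ ℚ) :=
    (AddMonoidAlgebra.coeff_injective (R := ℚ) (M := σ →₀ ℕ)).countable
  have hzero : ∀ P : MvPolynomial σ ℚ, P ≠ 0 →
      Dense {x : σ → ℝ | MvPolynomial.eval x (P.map (algebraMap ℚ ℝ)) ≠ 0} := by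
    intro P hP
    refine dense_iff_inter_open.2 fun U hU hne => ?_
    by_contra! hempty
    refine hP (MvPolynomial.map_injective _ (algebraMap ℚ ℝ).injective ?_)
    rw [map_zero]
    refine MvPolynomial.eq_zero_of_eqOn_zero_of_isOpen hU hne fun x hx => ?_
    by_contra hx'
    exact hempty.subset ⟨hx, hx'⟩
  have hdense := dense_iInter_of_isOpen (ι := {P : MvPolynomial σ ℚ // P ≠ 0})
    (fun P => isOpen_ne.preimage (MvPolynomial.continuous_eval _)) fun P => hzero P.1 P.2
  refine hdense.mono fun x hx => algebraicIndependent_iff.2 fun P hP => ?_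
  by_contra hP0
  exact Set.mem_iInter.1 hx ⟨P, hP0⟩ ((MvPolynomial.eval₂_eq_eval_map _ _ _).symm.trans hP)

/-! A bar framework has bars `i : ι` joining `a i` to `b i`; `ω : ι → ℝ` assigns tensions to the
bars, and `stress a b ω` is the induced symmetric weighting of vertex pairs. -/

namespace BarFramework

variable {V ι F : Type*} [NormedAddCommGroup F] [InnerProductSpace ℝ F] (a b : ι → V)

def sqLengths (q : V → F) (i : ι) : ℝ := ‖q (a i) - q (b i)‖ ^ 2

def barMap (i : ι) : (V → F) →L[ℝ] F := .proj (a i) - .proj (b i)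

def rigidityMap (p : V → F) : (V → F) →L[ℝ] ι → ℝ :=
  .pi fun i => (2 • innerSL ℝ (p (a i) - p (b i))).comp (barMap a b i)

theorem rigidityMap_apply (p q : V → F) (i : ι) :
    rigidityMap a b p q i = 2 * ⟪p (a i) - p (b i), q (a i) - q (b i)⟫ := by
  simp [rigidityMap, barMap, inner_sub_left, inner_sub_right]
  ring

theorem hasStrictFDerivAt_sqLengths [Fintype V] (p : V → F) :
    HasStrictFDerivAt (sqLengths a b) (rigidityMap a b p) p :=
  hasStrictFDerivAt_pi.2 fun i =>
    (hasStrictFDerivAt_norm_sq (p (a i) - p (b i))).comp p (barMap a b i).hasStrictFDerivAt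

variable [Fintype ι] [DecidableEq V]

def pairWeight (ω : ι → ℝ) (v w : V) : ℝ := ∑ i, if a i = v ∧ b i = w then ω i else 0

def stress (ω : ι → ℝ) (v w : V) : ℝ := pairWeight a b ω v w + pairWeight a b ω w v

theorem stress_comm (ω : ι → ℝ) (v w : V) : stress a b ω v w = stress a b ω w v :=
  add_comm _ _

theorem pairWeight_eq_zero {ω : ι → ℝ} {v w : V} (h : ∀ i, ¬(a i = v ∧ b i = w)) :
    pairWeight a b ω v w = 0 :=
  Finset.sum_eq_zero fun i _ => if_neg (h i)

theorem pairWeight_eq {ω : ι → ℝ} {v w : V} {i : ι} (h : ∀ j, a j = v ∧ b j = w ↔ j = i) :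
    pairWeight a b ω v w = ω i := by
  rw [pairWeight, Fintype.sum_eq_single i fun j hj => if_neg ((h j).not.2 hj),
    if_pos ((h i).2 rfl)]

theorem sum_sum_pairWeight_mul [Fintype V] (ω : ι → ℝ) (g : V → V → ℝ) :
    ∑ v, ∑ w, pairWeight a b ω v w * g v w = ∑ i, ω i * g (a i) (b i) := by
  simp only [pairWeight, Finset.sum_mul]
  conv_lhs => enter [2, v]; rw [Finset.sum_comm]
  rw [Finset.sum_comm]
  simp [ite_mul, ite_and]

theorem sum_mul_rigidityMap_apply [Fintype V] (ω : ι → ℝ) (p q : V → F) :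
    ∑ i, ω i * rigidityMap a b p q i
      = 2 * ∑ v, ⟪∑ w, stress a b ω v w • (p v - p w), q v⟫ := by
  have h₁ := sum_sum_pairWeight_mul a b ω fun v w => ⟪p v - p w, q v⟫
  have h₂ := sum_sum_pairWeight_mul a b ω fun v w => ⟪p w - p v, q w⟫
  rw [Finset.sum_comm] at h₂
  simp only [stress, sum_inner, real_inner_smul_left, add_mul, Finset.sum_add_distrib]
  rw [h₁, h₂, ← Finset.sum_add_distrib, Finset.mul_sum]
  refine Finset.sum_congr rfl fun i _ => ?_
  rw [rigidityMap_apply, inner_sub_right, inner_sub_left, inner_sub_left, inner_sub_left]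
  ring

theorem surjective_rigidityMap [Fintype V] (p : V → F)
    (h : ∀ ω : ι → ℝ, (∀ v, ∑ w, stress a b ω v w • (p v - p w) = 0) → ω = 0) :
    Function.Surjective (rigidityMap a b p) := by
  classical
  change Function.Surjective (rigidityMap a b p : (V → F) →ₗ[ℝ] ι → ℝ)
  rw [← LinearMap.dualMap_injective_iff, injective_iff_map_eq_zero]
  intro φ hφ
  set ω : ι → ℝ := fun i => φ fun j => if i = j then 1 else 0
  have hφω : ∀ y, φ y = ∑ i, ω i * y i := fun y => by
    simp only [LinearMap.pi_apply_eq_sum_univ φ y, smul_eq_mul, mul_comm, ω]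
  set force : V → F := fun v => ∑ w, stress a b ω v w • (p v - p w)
  have hwork : ∑ v, ‖force v‖ ^ 2 = 0 := by
    have := LinearMap.congr_fun hφ force
    rw [LinearMap.dualMap_apply, LinearMap.zero_apply, ContinuousLinearMap.coe_coe, hφω,
      sum_mul_rigidityMap_apply] at this
    simpa [force] using this
  have hforce : ∀ v, force v = 0 := fun v => by
    simpa using (Finset.sum_eq_zero_iff_of_nonneg fun v _ => sq_nonneg ‖force v‖).1 hwork v
      (Finset.mem_univ v)
  ext y
  simp [hφω, h ω hforce]

end BarFramework

open BarFramework

section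

variable {V : Type*} {d : ℕ} {G : SimpleGraph V}

abbrev SimpleGraph.OrientedEdge (G : SimpleGraph V) [LinearOrder V] : Type _ :=
  {x : V × V // G.Adj x.1 x.2 ∧ x.1 < x.2}

theorem IsStressFree.eq_zero_of_equilibrium [Fintype V] [LinearOrder V] [DecidableRel G.Adj]
    {p : V → EuclideanSpace ℝ (Fin d)} (hsf : IsStressFree G p)
    (ω : G.OrientedEdge → ℝ)
    (h : ∀ v, ∑ w, stress (fun e => e.1.1) (fun e => e.1.2) ω v w • (p v - p w) = 0) :
    ω = 0 := by
  have hnonadj : ∀ v w, ¬G.Adj v w →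
      pairWeight (fun e => e.1.1) (fun e => e.1.2) ω v w = 0 := by
    refine fun v w hvw => pairWeight_eq_zero _ _ fun e ⟨hv, hw⟩ => ?_
    subst hv hw
    exact hvw e.2.1
  have hzero := hsf _ (stress_comm _ _ ω) (fun v w hvw => by
    rw [stress, hnonadj v w hvw, hnonadj w v (mt G.adj_symm hvw), add_zero]) h
  funext e
  obtain ⟨⟨v, w⟩, hadj, hlt⟩ := e
  have hout : pairWeight (fun e => e.1.1) (fun e => e.1.2) ω w v = 0 := by
    refine pairWeight_eq_zero _ _ fun e ⟨hw, hv⟩ => ?_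
    subst hv hw
    exact hlt.not_gt e.2.2
  have hin : pairWeight (fun e => e.1.1) (fun e => e.1.2) ω v w = ω ⟨(v, w), hadj, hlt⟩ := by
    refine pairWeight_eq _ _ fun e => ?_
    simp [Subtype.ext_iff, Prod.ext_iff]
  simpa [stress, hin, hout] using hzero v w

theorem isSpherePacking_of_dist_eq {q : V → EuclideanSpace ℝ (Fin d)} {s : V → ℝ}
    (hpos : ∀ v, 0 < s v)
    (hsep : ∀ v w, v ≠ w → ¬G.Adj v w → s v + s w < dist (q v) (q w))
    (hadj : ∀ v w, G.Adj v w → dist (q v) (q w) = s v + s w) :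
    IsSpherePacking d G q s := by
  refine ⟨hpos, fun v w hvw => ?_⟩
  by_cases h : G.Adj v w
  · simp [hadj v w h, h]
  · exact ⟨(hsep v w hvw h).le, iff_of_false (hsep v w hvw h).ne' h⟩

theorem IsSpherePacking.eventually_pos_and_separated [Finite V] {p : V → EuclideanSpace ℝ (Fin d)}
    {r : V → ℝ} (hP : IsSpherePacking d G p r) :
    ∀ᶠ x : (V → ℝ) × (V → EuclideanSpace ℝ (Fin d)) in 𝓝 (r, p), (∀ v, 0 < x.1 v) ∧
      ∀ v w, v ≠ w → ¬G.Adj v w → x.1 v + x.1 w < dist (x.2 v) (x.2 w) := by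
  refine (eventually_all.2 fun v => ?_).and
    (eventually_all.2 fun v => eventually_all.2 fun w => ?_)
  · exact ContinuousAt.eventually_lt (by fun_prop) (by fun_prop) (hP.1 v)
  · rw [eventually_imp_distrib_left]
    intro hvw
    rw [eventually_imp_distrib_left]
    intro hadj
    have hlt : r v + r w < dist (p v) (p w) :=
      (hP.2 v w hvw).1.lt_of_ne fun h => hadj ((hP.2 v w hvw).2.1 h.symm)
    exact ContinuousAt.eventually_lt (by fun_prop) (by fun_prop) hlt

theorem radiiSet_mem_nhds [Fintype V] {p : V → EuclideanSpace ℝ (Fin d)} {r : V → ℝ}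
    (hP : IsSpherePacking d G p r) (hsf : IsStressFree G p) : radiiSet d G ∈ 𝓝 r := by
  -- Each edge is counted once, so that the squared edge lengths are independent coordinates.
  let : LinearOrder V := LinearOrder.lift' _ (Fintype.equivFin V).injective
  have := Classical.decRel G.Adj
  let a : G.OrientedEdge → V := fun e => e.1.1
  let b : G.OrientedEdge → V := fun e => e.1.2
  let c : (V → ℝ) → G.OrientedEdge → ℝ := fun s e => (s (a e) + s (b e)) ^ 2
  have hcr : c r = sqLengths a b p := funext fun e => by
    rw [sqLengths, ← dist_eq_norm, (hP.2 _ _ e.2.1.ne).2.2 e.2.1]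
  have hmap := (hasStrictFDerivAt_sqLengths a b p).map_nhds_eq_of_surj
    (LinearMap.range_eq_top.2 (surjective_rigidityMap a b p hsf.eq_zero_of_equilibrium))
  obtain ⟨A, hA, B, hB, hAB⟩ := mem_nhds_prod_iff.1 hP.eventually_pos_and_separated
  have himage : c ⁻¹' (sqLengths a b '' B) ∈ 𝓝 r := by
    refine ContinuousAt.preimage_mem_nhds (by fun_prop) ?_
    rw [hcr, ← hmap]
    exact image_mem_map hB
  filter_upwards [hA, himage] with s hs ⟨q, hq, hqs⟩
  obtain ⟨hpos, hsep⟩ := hAB (Set.mk_mem_prod hs hq)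
  have horiented : ∀ v w, G.Adj v w → v < w → dist (q v) (q w) = s v + s w := by
    intro v w hvw hlt
    have := congrFun hqs ⟨(v, w), hvw, hlt⟩
    rwa [sqLengths, ← dist_eq_norm, pow_left_inj₀ dist_nonneg (add_pos (hpos v) (hpos w)).le
      two_ne_zero] at this
  refine ⟨q, isSpherePacking_of_dist_eq hpos hsep fun v w hvw => ?_⟩
  rcases hvw.ne.lt_or_gt with hlt | hlt
  · exact horiented v w hvw hlt
  · rw [dist_comm, add_comm]
    exact horiented w v hvw.symm hlt

end

theorem radii_interior_of_stressFree_general {V : Type*} [Fintype V] (d : ℕ)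
    (G : SimpleGraph V) (p : V → EuclideanSpace ℝ (Fin d)) (r : V → ℝ)
    (hP : IsSpherePacking d G p r) (hsf : IsStressFree G p) :
    (interior (radiiSet d G)).Nonempty ∧
    ∃ (p' : V → EuclideanSpace ℝ (Fin d)) (r' : V → ℝ),
      IsSpherePacking d G p' r' ∧ GenericRadii r' := by
  have hr : r ∈ interior (radiiSet d G) := mem_interior_iff_mem_nhds.2 (radiiSet_mem_nhds hP hsf)
  obtain ⟨r', hr', hind⟩ :=
    dense_setOf_algebraicIndependent.inter_open_nonempty _ isOpen_interior ⟨r, hr⟩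
  obtain ⟨p', hp'⟩ := interior_subset hr'
  exact ⟨⟨r, hr⟩, p', r', hp', hind.injective, hind⟩

/-- If a stress-free `d`-dimensional sphere packing with contact graph `G` exists, then
`radii_d(G)` has non-empty interior and a generic-radii `d`-dimensional sphere packing
with contact graph `G` exists. -/
theorem radii_interior_of_stressFree {V : Type*} [Fintype V] (d : ℕ) (hd : 1 ≤ d)
    (G : SimpleGraph V) (p : V → EuclideanSpace ℝ (Fin d)) (r : V → ℝ)
    (hP : IsSpherePacking d G p r) (hsf : IsStressFree G p) :
    (interior (radiiSet d G)).Nonempty ∧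
    ∃ (p' : V → EuclideanSpace ℝ (Fin d)) (r' : V → ℝ),
      IsSpherePacking d G p' r' ∧ GenericRadii r' :=
  radii_interior_of_stressFree_general d G p r hP hsf

end
end

section
/- Let (G,p) be a stress-free framework in ℝ^d, where G=(V,E). If |V| ≥ d, then |E| ≤ d·|V| − d(d+1)/2. -/
/-!
Stress-freeness says that the transposed rigidity map, sending edge weights `c` to the resultant
forces `v ↦ ∑_w c_vw • (p v - p w)`, is injective, so its range has dimension `|E|`.
Symmetrising the double sum shows that a resultant is orthogonal to every velocity field `T` with
`⟪p v - p w, T v - T w⟫ = 0` for all `v, w`. Inside the `k`-dimensional span of the differences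
`p v - p w`, translations and rotations in the coordinate planes of an orthonormal basis give
`(k + 1).choose 2` independent such fields, whence `|E| + (k + 1).choose 2 ≤ k |V|`.
Finally `k |V| - (k + 1).choose 2` is increasing in `k` for `k ≤ |V|`, and `k ≤ d`.
-/

noncomputable section

open Finset Module Submodule
open scoped InnerProductSpace

theorem Submodule.IsOrtho.finrank_add_finrank_le {𝕜 E : Type*} [RCLike 𝕜] [NormedAddCommGroup E]
    [InnerProductSpace 𝕜 E] [FiniteDimensional 𝕜 E] {K N : Submodule 𝕜 E} (h : K ⟂ N) :
    finrank 𝕜 K + finrank 𝕜 N ≤ finrank 𝕜 E := by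
  rw [← N.finrank_add_finrank_orthogonal, add_comm (finrank 𝕜 N)]
  exact Nat.add_le_add_right (Submodule.finrank_mono (isOrtho_iff_le.mp h)) _

theorem Nat.mul_add_choose_two_le {n k d : ℕ} (hkd : k ≤ d) (hdn : d ≤ n) :
    n * k + (d + 1).choose 2 ≤ n * d + (k + 1).choose 2 := by
  induction d, hkd using Nat.le_induction with
  | base => rfl
  | succ d hkd ih =>
    have hchoose : (d + 1 + 1).choose 2 = (d + 1).choose 2 + (d + 1) := by
      rw [Nat.choose_succ_succ', Nat.choose_one_right, add_comm]
    have := ih (by omega)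
    rw [hchoose, Nat.mul_succ]
    omega

section Rigidity

variable {F : Type*} [NormedAddCommGroup F] [InnerProductSpace ℝ F]

def infinitesimalRotation (x y : F) : F →ₗ[ℝ] F :=
  (innerₗ F y).smulRight x - (innerₗ F x).smulRight y

theorem infinitesimalRotation_apply (x y z : F) :
    infinitesimalRotation x y z = ⟪y, z⟫_ℝ • x - ⟪x, z⟫_ℝ • y :=
  rfl

theorem inner_infinitesimalRotation_self (x y z : F) :
    ⟪z, infinitesimalRotation x y z⟫_ℝ = 0 := by
  simp only [infinitesimalRotation_apply, inner_sub_right, real_inner_smul_right, real_inner_comm]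
  ring

theorem linearIndependent_infinitesimalRotation {ι : Type*} [Fintype ι] [LinearOrder ι]
    (e : OrthonormalBasis ι ℝ F) :
    LinearIndependent ℝ fun ij : {ij : ι × ι // ij.1 < ij.2} =>
      infinitesimalRotation (e ij.1.1) (e ij.1.2) := by
  rw [Fintype.linearIndependent_iff]
  rintro g hg ⟨⟨i, j⟩, hij⟩
  -- `⟪e i, ρ (e j)⟫` picks out the coefficient of the rotation in the `(i, j)`-plane
  have hcoeff := congrArg (fun ρ : F →ₗ[ℝ] F => ⟪e i, ρ (e j)⟫_ℝ) hg
  simp only [LinearMap.sum_apply, LinearMap.smul_apply, infinitesimalRotation_apply, inner_sum,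
    real_inner_smul_right, inner_sub_right, e.inner_eq_ite, LinearMap.zero_apply,
    inner_zero_right] at hcoeff
  rw [Fintype.sum_eq_single ⟨(i, j), hij⟩] at hcoeff
  · simpa [hij.ne, hij.ne'] using hcoeff
  rintro ⟨⟨a, b⟩, hab⟩ hne
  have hij' : ¬(a = i ∧ b = j) := fun h => hne (by simp [h.1, h.2])
  have hji : ¬(a = j ∧ b = i) := fun h => (h.1 ▸ h.2 ▸ hab).not_gt hij
  dsimp only
  split_ifs <;> simp_all

variable {V : Type*}

def affineMotion (q : V → F) : F × (F →ₗ[ℝ] F) →ₗ[ℝ] PiLp 2 (fun _ : V => F) where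
  toFun tA := WithLp.toLp 2 fun v => tA.1 + tA.2 (q v)
  map_add' _ _ := by
    ext
    simp only [Prod.fst_add, Prod.snd_add, LinearMap.add_apply, PiLp.add_apply]
    abel
  map_smul' _ _ := by ext; simp

theorem affineMotion_injective [Nonempty V] {q : V → F}
    (hq : span ℝ (Set.range fun x : V × V => q x.1 - q x.2) = ⊤) :
    Function.Injective (affineMotion q) := by
  rw [injective_iff_map_eq_zero]
  rintro ⟨t, A⟩ h
  have hv (v : V) : t + A (q v) = 0 := by simpa [affineMotion] using congrArg (· v) h
  have hA : A = 0 := LinearMap.ext_on_range hq fun x => by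
    simp [eq_neg_of_add_eq_zero_right (hv x.1), eq_neg_of_add_eq_zero_right (hv x.2)]
  have ht : t = 0 := by simpa [hA] using hv (Classical.arbitrary V)
  simp [hA, ht]

theorem exists_spanning_translate {E : Type*} [AddCommGroup E] [Module ℝ E] [Nonempty V]
    (p : V → E) :
    ∃ (U : Submodule ℝ E) (q : V → U), (∀ v w, ((q v - q w : U) : E) = p v - p w) ∧
        span ℝ (Set.range fun x : V × V => q x.1 - q x.2) = ⊤ := by
  let v₀ := Classical.arbitrary V
  let q v : span ℝ (Set.range fun x : V × V => p x.1 - p x.2) :=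
    ⟨p v - p v₀, subset_span ⟨(v, v₀), rfl⟩⟩
  have hq (v w : V) : ((q v - q w : span ℝ _) : E) = p v - p w := by simp [q]
  refine ⟨_, q, hq, ?_⟩
  convert span_span_coe_preimage (R := ℝ) (s := Set.range fun x : V × V => p x.1 - p x.2)
  ext x
  simp only [Set.mem_range, Set.mem_preimage, ← hq, Subtype.coe_inj]

variable {ι : Type*} [Fintype ι] [LinearOrder ι]

def trivialMotion (e : OrthonormalBasis ι ℝ F) (q : V → F) :
    ι ⊕ {ij : ι × ι // ij.1 < ij.2} → PiLp 2 (fun _ : V => F) :=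
  affineMotion q ∘ Sum.elim (LinearMap.inl ℝ F _ ∘ e)
    (LinearMap.inr ℝ F _ ∘ fun ij => infinitesimalRotation (e ij.1.1) (e ij.1.2))

theorem linearIndependent_trivialMotion [Nonempty V] (e : OrthonormalBasis ι ℝ F) {q : V → F}
    (hq : span ℝ (Set.range fun x : V × V => q x.1 - q x.2) = ⊤) :
    LinearIndependent ℝ (trivialMotion e q) :=
  (linearIndependent_inl_union_inr' e.toBasis.linearIndependent
    (linearIndependent_infinitesimalRotation e)).map' _
    (LinearMap.ker_eq_bot.2 (affineMotion_injective hq))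

theorem inner_sub_trivialMotion_sub (e : OrthonormalBasis ι ℝ F) (q : V → F)
    (j : ι ⊕ {ij : ι × ι // ij.1 < ij.2}) (v w : V) :
    ⟪q v - q w, trivialMotion e q j v - trivialMotion e q j w⟫_ℝ = 0 := by
  rcases j with i | ij
  · simp [trivialMotion, affineMotion]
  · simp [trivialMotion, affineMotion, ← map_sub, inner_infinitesimalRotation_self]

namespace SimpleGraph

variable (G : SimpleGraph V)

open scoped Classical in
def edgeStress (c : G.edgeSet → ℝ) (v w : V) : ℝ :=
  if h : G.Adj v w then c ⟨s(v, w), h⟩ else 0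

variable {G}

theorem edgeStress_comm (c : G.edgeSet → ℝ) (v w : V) :
    G.edgeStress c v w = G.edgeStress c w v := by
  by_cases h : G.Adj v w
  · simp [edgeStress, h, h.symm, Sym2.eq_swap]
  · have h' : ¬G.Adj w v := fun h' => h h'.symm
    simp [edgeStress, h, h']

theorem edgeStress_of_not_adj (c : G.edgeSet → ℝ) {v w : V} (h : ¬G.Adj v w) :
    G.edgeStress c v w = 0 := by
  simp [edgeStress, h]

theorem eq_zero_of_edgeStress_eq_zero {c : G.edgeSet → ℝ}
    (h : ∀ v w, G.edgeStress c v w = 0) : c = 0 := by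
  funext ⟨e, he⟩
  induction e using Sym2.ind with
  | _ v w => simpa [edgeStress, show G.Adj v w from he] using h v w

end SimpleGraph

variable [Fintype V]

def resultant (q : V → F) (σ : V → V → ℝ) (v : V) : F :=
  ∑ w, σ v w • (q v - q w)

theorem sum_inner_resultant_eq_zero {σ : V → V → ℝ} (hσ : ∀ v w, σ v w = σ w v) {q T : V → F}
    (hT : ∀ v w, ⟪q v - q w, T v - T w⟫_ℝ = 0) :
    ∑ v, ⟪resultant q σ v, T v⟫_ℝ = 0 := by
  have hswap : ∑ v, ∑ w, σ v w * ⟪q v - q w, T v⟫_ℝ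
      = -∑ v, ∑ w, σ v w * ⟪q v - q w, T w⟫_ℝ := by
    rw [sum_comm, ← sum_neg_distrib]
    refine sum_congr rfl fun v _ => ?_
    rw [← sum_neg_distrib]
    refine sum_congr rfl fun w _ => ?_
    rw [hσ, ← neg_sub, inner_neg_left, mul_neg]
  have hdiff : ∑ v, ∑ w, σ v w * ⟪q v - q w, T v⟫_ℝ
      - ∑ v, ∑ w, σ v w * ⟪q v - q w, T w⟫_ℝ = 0 := by
    simp only [← sum_sub_distrib, ← mul_sub, ← inner_sub_right, hT, mul_zero, sum_const_zero]
  simp only [resultant, sum_inner, real_inner_smul_left]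
  linarith

namespace SimpleGraph

variable (G : SimpleGraph V)

def edgeResultant (q : V → F) : (G.edgeSet → ℝ) →ₗ[ℝ] PiLp 2 (fun _ : V => F) where
  toFun c := WithLp.toLp 2 (resultant q (G.edgeStress c))
  map_add' c c' := by
    ext v
    simp only [resultant, edgeStress, PiLp.add_apply, ← sum_add_distrib, ← add_smul]
    congr! 2
    split_ifs <;> simp
  map_smul' a c := by
    ext v
    simp only [resultant, edgeStress, PiLp.smul_apply, smul_sum, smul_smul, RingHom.id_apply]
    congr! 2
    split_ifs <;> simp

variable {G}

theorem isOrtho_range_edgeResultant_span_trivialMotion (e : OrthonormalBasis ι ℝ F)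
    (q : V → F) :
    LinearMap.range (G.edgeResultant q) ⟂ span ℝ (Set.range (trivialMotion e q)) := by
  rw [← span_eq (LinearMap.range _), isOrtho_span]
  rintro _ ⟨c, rfl⟩ _ ⟨j, rfl⟩
  exact sum_inner_resultant_eq_zero (edgeStress_comm c) (inner_sub_trivialMotion_sub e q j)

theorem ncard_edgeSet_add_choose_two_le [FiniteDimensional ℝ F] [Nonempty V] {q : V → F}
    (hq : span ℝ (Set.range fun x : V × V => q x.1 - q x.2) = ⊤)
    (hinj : Function.Injective (G.edgeResultant q)) :
    G.edgeSet.ncard + (finrank ℝ F + 1).choose 2 ≤ Fintype.card V * finrank ℝ F := by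
  classical
  let e := stdOrthonormalBasis ℝ F
  have h := (isOrtho_range_edgeResultant_span_trivialMotion (G := G) e q).finrank_add_finrank_le
  have hE : finrank ℝ (G.edgeSet → ℝ) = G.edgeSet.ncard := by
    rw [Module.finrank_fintype_fun_eq_card, ← Nat.card_eq_fintype_card, Nat.card_coe_set_eq]
  have hT : Fintype.card
      (Fin (finrank ℝ F) ⊕ {ij : Fin (finrank ℝ F) × Fin (finrank ℝ F) // ij.1 < ij.2})
      = (finrank ℝ F + 1).choose 2 := by
    rw [Fintype.card_sum, Fintype.card_subtype, Fintype.card_product_filter_lt, Fintype.card_fin,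
      Nat.choose_succ_succ', Nat.choose_one_right]
  have hV : finrank ℝ (PiLp 2 fun _ : V => F) = Fintype.card V * finrank ℝ F := by
    rw [(WithLp.linearEquiv 2 ℝ (V → F)).finrank_eq, Module.finrank_pi_fintype, sum_const,
      card_univ, smul_eq_mul]
  rwa [LinearMap.finrank_range_of_inj hinj,
    finrank_span_eq_card (linearIndependent_trivialMotion e hq), hE, hT, hV] at h

end SimpleGraph

theorem IsStressFree.edgeResultant_injective {d : ℕ} {G : SimpleGraph V}
    {p : V → EuclideanSpace ℝ (Fin d)} (hsf : IsStressFree G p)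
    (f : F →ₗ[ℝ] EuclideanSpace ℝ (Fin d)) {q : V → F}
    (hq : ∀ v w, f (q v - q w) = p v - p w) :
    Function.Injective (G.edgeResultant q) := by
  rw [injective_iff_map_eq_zero]
  intro c hc
  refine SimpleGraph.eq_zero_of_edgeStress_eq_zero <| hsf _ (SimpleGraph.edgeStress_comm c)
    (fun _ _ => SimpleGraph.edgeStress_of_not_adj c) fun v => ?_
  simpa [SimpleGraph.edgeResultant, resultant, hq] using congrArg (fun x => f (x v)) hc

end Rigidity

/-- Maxwell's bound: a stress-free framework in `ℝ^d` on at least `d` vertices has at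
most `d·|V| − d(d+1)/2` edges. -/
theorem maxwell_count {V : Type*} [Fintype V] {d : ℕ} (G : SimpleGraph V)
    (p : V → EuclideanSpace ℝ (Fin d)) (hsf : IsStressFree G p)
    (hV : d ≤ Fintype.card V) :
    (G.edgeSet.ncard : ℤ) ≤ d * Fintype.card V - d * (d + 1) / 2 := by
  rcases isEmpty_or_nonempty V with hV₀ | hV₀
  · obtain rfl : d = 0 := by simpa using hV
    simp [Set.eq_empty_of_isEmpty G.edgeSet]
  obtain ⟨U, q, hq, hspan⟩ := exists_spanning_translate p
  have hcount :=
    G.ncard_edgeSet_add_choose_two_le hspan (hsf.edgeResultant_injective U.subtype hq)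
  have hk : finrank ℝ U ≤ d := (Submodule.finrank_le U).trans_eq finrank_euclideanSpace_fin
  have hN : G.edgeSet.ncard + (d + 1).choose 2 ≤ Fintype.card V * d := by
    have := Nat.mul_add_choose_two_le hk hV
    omega
  rw [Nat.choose_two_right, Nat.add_sub_cancel, Nat.mul_comm (d + 1), Nat.mul_comm _ d] at hN
  zify at hN
  linarith

end
end
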